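/- arXiv:1810.04272 — 9 statements merged into one kernel-verified Lean document; each statement's English description precedes it below -/
import Mathlib

section
/- Let N ≥ 1 and let f : ℝ^N → ℝ be continuously differentiable with f ≥ 1 everywhere, and suppose that for some 0 < γ < 1 and some M > 0 one has |∇f(x)| ≤ M·f(x)^γ for all x ∈ ℝ^N. Then there exists a constant C > 0 such that f(X) ≤ C·(1 + |X − Y|²)^{1/(2(1−γ))}·f(Y) for all X, Y ∈ ℝ^N. -/
/-!
The function `g = f ^ (1 - γ)` has derivative `(1 - γ) f ^ (-γ) ∇f`, which the hypothesis bounds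
by `(1 - γ) M`; so `g` is Lipschitz and `g X ≤ g Y + (1 - γ) M |X - Y|`. As `g Y ≥ 1`, this gives
`g X ≤ g Y (1 + (1 - γ) M) ⟨X - Y⟩`, and raising to the power `1 / (1 - γ)` yields the claim.
-/

open Real

section MeanValue

variable {E : Type*} [NormedAddCommGroup E] [NormedSpace ℝ E]

theorem norm_fderiv_rpow_le_of_norm_fderiv_le {f : E → ℝ} {γ M : ℝ} {x : E}
    (hfx : 0 < f x) (hγ : γ < 1) (hgrad : ‖fderiv ℝ f x‖ ≤ M * f x ^ γ) :
    ‖((1 - γ) * f x ^ (1 - γ - 1)) • fderiv ℝ f x‖ ≤ (1 - γ) * M := by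
  have hcoef : 0 ≤ (1 - γ) * f x ^ (1 - γ - 1) :=
    mul_nonneg (by linarith) (rpow_nonneg hfx.le _)
  calc ‖((1 - γ) * f x ^ (1 - γ - 1)) • fderiv ℝ f x‖
      = (1 - γ) * f x ^ (1 - γ - 1) * ‖fderiv ℝ f x‖ := by
        rw [norm_smul, Real.norm_of_nonneg hcoef]
    _ ≤ (1 - γ) * f x ^ (1 - γ - 1) * (M * f x ^ γ) := mul_le_mul_of_nonneg_left hgrad hcoef
    _ = (1 - γ) * M * f x ^ (1 - γ - 1 + γ) := by rw [rpow_add hfx]; ring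
    _ = (1 - γ) * M := by norm_num

theorem rpow_sub_rpow_le_of_norm_fderiv_le {f : E → ℝ} {γ M : ℝ} (hf : Differentiable ℝ f)
    (hpos : ∀ x, 0 < f x) (hγ : γ < 1) (hgrad : ∀ x, ‖fderiv ℝ f x‖ ≤ M * f x ^ γ) (x y : E) :
    f x ^ (1 - γ) - f y ^ (1 - γ) ≤ (1 - γ) * M * ‖x - y‖ := by
  have hderiv : ∀ z, HasFDerivAt (fun z => f z ^ (1 - γ))
      (((1 - γ) * f z ^ (1 - γ - 1)) • fderiv ℝ f z) z := fun z =>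
    (hasDerivAt_rpow_const (Or.inl (hpos z).ne')).comp_hasFDerivAt z (hf z).hasFDerivAt
  have hmvt := convex_univ.norm_image_sub_le_of_norm_hasFDerivWithin_le
    (fun z _ => (hderiv z).hasFDerivWithinAt)
    (fun z _ => norm_fderiv_rpow_le_of_norm_fderiv_le (hpos z) hγ (hgrad z))
    (Set.mem_univ y) (Set.mem_univ x)
  exact (le_abs_self _).trans hmvt

end MeanValue

theorem norm_fderiv_eq_norm_gradient {F : Type*} [NormedAddCommGroup F] [InnerProductSpace ℝ F]
    [CompleteSpace F] (f : F → ℝ) (x : F) : ‖fderiv ℝ f x‖ = ‖gradient f x‖ := by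
  rw [← toDual_gradient, LinearIsometryEquiv.norm_map]

theorem one_add_mul_le_mul_sqrt_one_add_sq {c : ℝ} (hc : 0 ≤ c) (t : ℝ) :
    1 + c * t ≤ (1 + c) * √(1 + t ^ 2) := by
  have h1 : 1 ≤ √(1 + t ^ 2) := one_le_sqrt.mpr (by nlinarith)
  have h2 : t ≤ √(1 + t ^ 2) := le_sqrt_of_sq_le (by linarith)
  nlinarith [mul_le_mul_of_nonneg_left h2 hc]

theorem le_mul_rpow_one_div_of_rpow_le_mul {a b k q : ℝ} (ha : 0 ≤ a) (hb : 0 ≤ b) (hk : 0 ≤ k)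
    (hq : 0 < q) (h : a ^ q ≤ b ^ q * k) : a ≤ b * k ^ (1 / q) := by
  have hroot : ∀ z : ℝ, 0 ≤ z → (z ^ q) ^ (1 / q) = z := fun z hz => by
    rw [← rpow_mul hz, mul_one_div_cancel hq.ne', rpow_one]
  calc a = (a ^ q) ^ (1 / q) := (hroot a ha).symm
    _ ≤ (b ^ q * k) ^ (1 / q) := rpow_le_rpow (rpow_nonneg ha q) h (by positivity)
    _ = b * k ^ (1 / q) := by rw [mul_rpow (rpow_nonneg hb q) hk, hroot b hb]

theorem gradient_bound_implies_order_function_general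
    (N : ℕ) (f : EuclideanSpace ℝ (Fin N) → ℝ)
    (hf : ContDiff ℝ 1 f) (hf1 : ∀ x, 1 ≤ f x)
    (γ M : ℝ) (hγ1 : γ < 1) (hM : 0 < M)
    (hgrad : ∀ x, ‖gradient f x‖ ≤ M * f x ^ γ) :
    ∃ C > 0, ∀ X Y : EuclideanSpace ℝ (Fin N),
      f X ≤ C * (1 + ‖X - Y‖ ^ 2) ^ (1 / (2 * (1 - γ))) * f Y := by
  have hpos : ∀ x, 0 < f x := fun x => one_pos.trans_le (hf1 x)
  have hγ : 0 < 1 - γ := by linarith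
  set c := (1 - γ) * M
  have hc : 0 ≤ c := mul_nonneg hγ.le hM.le
  refine ⟨(1 + c) ^ (1 / (1 - γ)), by positivity, fun X Y => ?_⟩
  have hlip := rpow_sub_rpow_le_of_norm_fderiv_le (hf.differentiable one_ne_zero) hpos hγ1
    (fun x => (norm_fderiv_eq_norm_gradient f x).trans_le (hgrad x)) X Y
  have hY : 1 ≤ f Y ^ (1 - γ) := one_le_rpow (hf1 Y) hγ.le
  have hpow : f X ^ (1 - γ) ≤ f Y ^ (1 - γ) * ((1 + c) * √(1 + ‖X - Y‖ ^ 2)) :=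
    calc f X ^ (1 - γ) ≤ f Y ^ (1 - γ) + c * ‖X - Y‖ := by linarith
      _ ≤ f Y ^ (1 - γ) * (1 + c * ‖X - Y‖) := by nlinarith [mul_nonneg hc (norm_nonneg (X - Y))]
      _ ≤ f Y ^ (1 - γ) * ((1 + c) * √(1 + ‖X - Y‖ ^ 2)) := mul_le_mul_of_nonneg_left
          (one_add_mul_le_mul_sqrt_one_add_sq hc _) (by positivity)
  calc f X ≤ f Y * ((1 + c) * √(1 + ‖X - Y‖ ^ 2)) ^ (1 / (1 - γ)) :=
        le_mul_rpow_one_div_of_rpow_le_mul (hpos X).le (hpos Y).le (by positivity) hγ hpow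
    _ = (1 + c) ^ (1 / (1 - γ)) * (1 + ‖X - Y‖ ^ 2) ^ (1 / (2 * (1 - γ))) * f Y := by
        rw [mul_rpow (by positivity) (by positivity), sqrt_eq_rpow, ← rpow_mul (by positivity),
          one_div_mul_one_div]
        ring

/-- If `f : ℝ^N → ℝ` is `C¹`, `f ≥ 1`, and `‖∇f‖ ≤ M f^γ` for some
`0 < γ < 1`, `M > 0`, then `f(X) ≤ C (1 + |X-Y|²)^(1/(2(1-γ))) f(Y)` for some `C > 0`. -/
theorem gradient_bound_implies_order_function
    (N : ℕ) (hN : 1 ≤ N) (f : EuclideanSpace ℝ (Fin N) → ℝ)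
    (hf : ContDiff ℝ 1 f) (hf1 : ∀ x, 1 ≤ f x)
    (γ M : ℝ) (hγ0 : 0 < γ) (hγ1 : γ < 1) (hM : 0 < M)
    (hgrad : ∀ x, ‖gradient f x‖ ≤ M * f x ^ γ) :
    ∃ C > 0, ∀ X Y : EuclideanSpace ℝ (Fin N),
      f X ≤ C * (1 + ‖X - Y‖ ^ 2) ^ (1 / (2 * (1 - γ))) * f Y :=
  gradient_bound_implies_order_function_general N f hf hf1 γ M hγ1 hM hgrad
end

section
/- Let f : ℝ^n → ℝ be twice continuously differentiable with f(x) ≥ 0 for all x, and suppose there is M > 0 such that the operator norm of the Hessian f''(x) is at most M for every x ∈ ℝ^n. Then |∇f(x)|² ≤ 2M·f(x) for all x ∈ ℝ^n. -/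
/-!
A bound `K` on the second derivative makes `f'` `K`-Lipschitz, so along every line
`f (x + t • v) ≤ f x + t f'(x) v + K t² ‖v‖² / 2`. As `f ≥ 0`, this quadratic in `t` is
nonnegative, hence its discriminant is nonpositive: `(f'(x) v)² ≤ 2 K f(x) ‖v‖²`.
Taking the supremum over `v` gives `‖f'(x)‖² = ‖∇f(x)‖² ≤ 2 K f(x)`.
-/

open scoped NNReal

section Descent

variable {E : Type*} [NormedAddCommGroup E] [NormedSpace ℝ E] {f : E → ℝ} {K : ℝ≥0}

theorem le_add_fderiv_add_of_lipschitzWith_fderiv (hf : Differentiable ℝ f)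
    (hK : LipschitzWith K (fderiv ℝ f)) (x v : E) :
    f (x + v) ≤ f x + fderiv ℝ f x v + K / 2 * ‖v‖ ^ 2 := by
  have hline : ∀ t : ℝ, HasDerivAt (fun t : ℝ => f (x + t • v)) (fderiv ℝ f (x + t • v) v) t :=
    fun t => (hf _).hasFDerivAt.comp_hasDerivAt t
      (((hasDerivAt_id t).smul_const v).const_add x |>.congr_deriv (one_smul ℝ v))
  have hslope : ∀ t, 0 ≤ t → fderiv ℝ f (x + t • v) v ≤ fderiv ℝ f x v + K * ‖v‖ ^ 2 * t := by
    intro t ht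
    have hdist : ‖fderiv ℝ f (x + t • v) - fderiv ℝ f x‖ ≤ K * (t * ‖v‖) := by
      simpa [dist_eq_norm, norm_smul, abs_of_nonneg ht] using hK.dist_le_mul (x + t • v) x
    have := ((fderiv ℝ f (x + t • v) - fderiv ℝ f x).le_opNorm v).trans
      (mul_le_mul_of_nonneg_right hdist (norm_nonneg v))
    rw [sub_apply] at this
    nlinarith [Real.le_norm_self (fderiv ℝ f (x + t • v) v - fderiv ℝ f x v)]
  have hmajorant : ∀ t : ℝ, HasDerivAt (fun t => f x + t * fderiv ℝ f x v + K / 2 * ‖v‖ ^ 2 * t ^ 2)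
      (fderiv ℝ f x v + K * ‖v‖ ^ 2 * t) t := by
    intro t
    exact (((hasDerivAt_id t).mul_const _).const_add _).add
      ((hasDerivAt_pow 2 t).const_mul _) |>.congr_deriv (by ring)
  have := image_le_of_deriv_right_le_deriv_boundary (a := 0) (b := 1)
    (fun t _ => (hline t).continuousAt.continuousWithinAt)
    (fun t _ => (hline t).hasDerivWithinAt) (by simp)
    (fun t _ => (hmajorant t).continuousAt.continuousWithinAt)
    (fun t _ => (hmajorant t).hasDerivWithinAt) (fun t ht => hslope t ht.1)
    (Set.right_mem_Icc.2 zero_le_one)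
  simpa using this

theorem sq_fderiv_apply_le_of_nonneg (hf : Differentiable ℝ f)
    (hK : LipschitzWith K (fderiv ℝ f)) (hf0 : ∀ x, 0 ≤ f x) (x v : E) :
    fderiv ℝ f x v ^ 2 ≤ 2 * K * f x * ‖v‖ ^ 2 := by
  have hquad_nonneg : ∀ t : ℝ, 0 ≤ K / 2 * ‖v‖ ^ 2 * (t * t) + fderiv ℝ f x v * t + f x := by
    intro t
    have := le_add_fderiv_add_of_lipschitzWith_fderiv hf hK x (t • v)
    rw [map_smul, smul_eq_mul, norm_smul, Real.norm_eq_abs, mul_pow, sq_abs] at this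
    nlinarith [hf0 (x + t • v)]
  have := discrim_le_zero hquad_nonneg
  rw [discrim] at this
  linarith

theorem sq_norm_fderiv_le_of_nonneg (hf : Differentiable ℝ f)
    (hK : LipschitzWith K (fderiv ℝ f)) (hf0 : ∀ x, 0 ≤ f x) (x : E) :
    ‖fderiv ℝ f x‖ ^ 2 ≤ 2 * K * f x := by
  have hbound : ‖fderiv ℝ f x‖ ≤ √(2 * K * f x) := by
    refine ContinuousLinearMap.opNorm_le_bound _ (Real.sqrt_nonneg _) fun v => ?_
    rw [← Real.sqrt_sq (norm_nonneg v), ← Real.sqrt_mul (by have := hf0 x; positivity),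
      Real.norm_eq_abs]
    exact Real.abs_le_sqrt (sq_fderiv_apply_le_of_nonneg hf hK hf0 x v)
  calc ‖fderiv ℝ f x‖ ^ 2 ≤ √(2 * K * f x) ^ 2 := pow_le_pow_left₀ (norm_nonneg _) hbound 2
    _ = 2 * K * f x := Real.sq_sqrt (by have := hf0 x; positivity)

end Descent

theorem lipschitzWith_fderiv_of_norm_fderiv_fderiv_le {𝕜 E F : Type*} [RCLike 𝕜]
    [NormedAddCommGroup E] [NormedSpace 𝕜 E] [NormedAddCommGroup F] [NormedSpace 𝕜 F]
    {f : E → F} {M : ℝ} (hf : ContDiff 𝕜 2 f) (hM : ∀ x, ‖fderiv 𝕜 (fderiv 𝕜 f) x‖ ≤ M) :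
    LipschitzWith M.toNNReal (fderiv 𝕜 f) :=
  lipschitzWith_of_nnnorm_fderiv_le
    ((hf.fderiv_right (m := 1) le_rfl).differentiable one_ne_zero)
    fun x => by simpa [← norm_toNNReal] using Real.toNNReal_le_toNNReal (hM x)

theorem glaeser_inequality_general
    (n : ℕ) (f : EuclideanSpace ℝ (Fin n) → ℝ)
    (hf : ContDiff ℝ 2 f) (hf0 : ∀ x, 0 ≤ f x)
    (M : ℝ)
    (hHess : ∀ x, ‖fderiv ℝ (fun y => fderiv ℝ f y) x‖ ≤ M) :
    ∀ x, ‖gradient f x‖ ^ 2 ≤ 2 * M * f x := by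
  intro x
  have hM : 0 ≤ M := (norm_nonneg (fderiv ℝ (fderiv ℝ f) x)).trans (hHess x)
  have hfderiv := sq_norm_fderiv_le_of_nonneg (hf.differentiable two_ne_zero)
    (lipschitzWith_fderiv_of_norm_fderiv_fderiv_le hf hHess) hf0 x
  rwa [Real.coe_toNNReal M hM, ← (InnerProductSpace.toDual ℝ _).symm.norm_map] at hfderiv

/-- Glaeser-type inequality: if `f : ℝ^n → ℝ` is `C²`, nonnegative, with
Hessian operator norm bounded by `M`, then `‖∇f(x)‖² ≤ 2 M f(x)` for all `x`. -/
theorem glaeser_inequality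
    (n : ℕ) (f : EuclideanSpace ℝ (Fin n) → ℝ)
    (hf : ContDiff ℝ 2 f) (hf0 : ∀ x, 0 ≤ f x)
    (M : ℝ) (hM : 0 < M)
    (hHess : ∀ x, ‖fderiv ℝ (fun y => fderiv ℝ f y) x‖ ≤ M) :
    ∀ x, ‖gradient f x‖ ^ 2 ≤ 2 * M * f x :=
  glaeser_inequality_general n f hf hf0 M hHess
end

section
/- Let A = (A_1, …, A_n) : ℝ^n → ℝ^n be continuously differentiable with bounded Jacobian (|∇A_j(x)| ≤ M for all x and all j), and let V₁, V₂ : ℝ^n → ℝ be twice continuously differentiable with V₁ ≥ 0 and with all second derivatives of V₁ and V₂ bounded. Define m on ℝ^{2n} by m(x,ξ) = 1 + |ξ − A(x)|² + V₁(x) + |∇V₂(x)|². Then there exists C > 0 such that |∇m(X)| ≤ C·m(X)^{1/2} for all X = (x,ξ) ∈ ℝ^{2n}, and consequently m is an order function: there exists C' > 0 with m(X) ≤ C'·(1 + |X − Y|²)·m(Y) for all X, Y ∈ ℝ^{2n}. -/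
noncomputable section

/-- Phase space `ℝ^{2n} = ℝ^n_x × ℝ^n_ξ`, with the Euclidean (`L²`) norm. -/
abbrev PhaseSpace (n : ℕ) :=
  WithLp 2 (EuclideanSpace ℝ (Fin n) × EuclideanSpace ℝ (Fin n))

/-- The position variable `x` of a phase space point `X = (x, ξ)`. -/
def posPart {n : ℕ} (X : PhaseSpace n) : EuclideanSpace ℝ (Fin n) :=
  (WithLp.equiv 2 (EuclideanSpace ℝ (Fin n) × EuclideanSpace ℝ (Fin n)) X).1

/-- The momentum variable `ξ` of a phase space point `X = (x, ξ)`. -/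
def momPart {n : ℕ} (X : PhaseSpace n) : EuclideanSpace ℝ (Fin n) :=
  (WithLp.equiv 2 (EuclideanSpace ℝ (Fin n) × EuclideanSpace ℝ (Fin n)) X).2

/-!
Each summand of `m` has gradient `O(√m)`. For `|ξ - A x|²` and `|∇V₂ x|²` this is the chain rule:
the gradient is twice the vector times a bounded derivative (`‖A'‖ ≤ M`, `‖∇²V₂‖ ≤ M`). For `V₁` it
is Glaeser's inequality `|∇V₁|² ≤ 4 M V₁`, since a nonnegative function with Hessian bounded by `M`
cannot decrease too fast. Then `√m` is Lipschitz, so `m X ≤ 2 m Y + C² ‖X - Y‖² / 2`, and `m ≥ 1`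
turns this into the order-function bound.
-/

open InnerProductSpace

section SecondDerivative

variable {E F : Type*} [NormedAddCommGroup E] [NormedSpace ℝ E]
  [NormedAddCommGroup F] [NormedSpace ℝ F] {f : E → F} {M : ℝ}

lemma norm_fderiv_fderiv_eq_norm_iteratedFDeriv_two (f : E → F) (x : E) :
    ‖fderiv ℝ (fderiv ℝ f) x‖ = ‖iteratedFDeriv ℝ 2 f x‖ := by
  rw [← norm_iteratedFDeriv_fderiv (n := 1), ← norm_iteratedFDeriv_fderiv (n := 0),
    norm_iteratedFDeriv_zero]

lemma differentiable_fderiv_of_contDiff_two (hf : ContDiff ℝ 2 f) :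
    Differentiable ℝ (fderiv ℝ f) :=
  (hf.fderiv_right (m := 1) le_rfl).differentiable one_ne_zero

lemma norm_fderiv_sub_fderiv_le (hf : ContDiff ℝ 2 f)
    (hM : ∀ z, ‖iteratedFDeriv ℝ 2 f z‖ ≤ M) (x y : E) :
    ‖fderiv ℝ f y - fderiv ℝ f x‖ ≤ M * ‖y - x‖ :=
  convex_univ.norm_image_sub_le_of_norm_fderiv_le
    (fun z _ => (differentiable_fderiv_of_contDiff_two hf) z)
    (fun z _ => (norm_fderiv_fderiv_eq_norm_iteratedFDeriv_two f z).trans_le (hM z))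
    trivial trivial

lemma norm_sub_sub_fderiv_le (hf : ContDiff ℝ 2 f)
    (hM : ∀ z, ‖iteratedFDeriv ℝ 2 f z‖ ≤ M) (x y : E) :
    ‖f y - f x - fderiv ℝ f x (y - x)‖ ≤ M * ‖y - x‖ ^ 2 := by
  have hM0 : 0 ≤ M := (norm_nonneg _).trans (hM x)
  have hfderiv : ∀ z ∈ segment ℝ x y, ‖fderiv ℝ f z - fderiv ℝ f x‖ ≤ M * ‖y - x‖ := by
    intro z hz
    calc ‖fderiv ℝ f z - fderiv ℝ f x‖ ≤ M * ‖z - x‖ := norm_fderiv_sub_fderiv_le hf hM x z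
      _ ≤ M * ‖y - x‖ := by
        gcongr
        simpa [dist_eq_norm, norm_sub_rev] using segment_subset_closedBall_left x y hz
  calc ‖f y - f x - fderiv ℝ f x (y - x)‖ ≤ M * ‖y - x‖ * ‖y - x‖ :=
        (convex_segment x y).norm_image_sub_le_of_norm_fderiv_le'
          (fun z _ => (hf.differentiable two_ne_zero) z) hfderiv
          (left_mem_segment ℝ x y) (right_mem_segment ℝ x y)
    _ = M * ‖y - x‖ ^ 2 := by ring

/-- Glaeser's inequality. -/
lemma norm_fderiv_le_two_mul_sqrt_of_nonneg {f : E → ℝ} (hf : ContDiff ℝ 2 f)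
    (hM : ∀ z, ‖iteratedFDeriv ℝ 2 f z‖ ≤ M) (hf0 : ∀ z, 0 ≤ f z) (x : E) :
    ‖fderiv ℝ f x‖ ≤ 2 * √(M * f x) := by
  have hM0 : 0 ≤ M := (norm_nonneg _).trans (hM x)
  refine ContinuousLinearMap.opNorm_le_bound _ (by positivity) fun w => ?_
  -- `0 ≤ f (x + t • w)` keeps the Taylor upper bound, a quadratic in `t`, nonnegative,
  -- so its discriminant is `≤ 0`
  have hquad : ∀ t : ℝ, 0 ≤ (M * ‖w‖ ^ 2) * (t * t) + fderiv ℝ f x w * t + f x := by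
    intro t
    have h := norm_sub_sub_fderiv_le hf hM x (x + t • w)
    rw [add_sub_cancel_left, map_smul, norm_smul, Real.norm_eq_abs, Real.norm_eq_abs,
      smul_eq_mul, mul_pow, sq_abs] at h
    nlinarith [(abs_le.mp h).2, hf0 (x + t • w)]
  have hdiscrim := discrim_le_zero hquad
  rw [discrim] at hdiscrim
  rw [Real.norm_eq_abs]
  apply abs_le_of_sq_le_sq _ (by positivity)
  rw [mul_pow, mul_pow, Real.sq_sqrt (by nlinarith [hf0 x])]
  nlinarith

end SecondDerivative

def IsOrderFunction {F : Type*} [NormedAddCommGroup F] (m : F → ℝ) : Prop :=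
  (∀ X, 0 < m X) ∧ ∃ C > 0, ∀ X Y, m X ≤ C * (1 + ‖X - Y‖ ^ 2) * m Y

section OrderFunction

variable {F : Type*} [NormedAddCommGroup F] [NormedSpace ℝ F] {f : F → ℝ} {C : ℝ}

lemma sqrt_le_sqrt_add_of_norm_fderiv_le (hf : Differentiable ℝ f) (hpos : ∀ X, 0 < f X)
    (hC : ∀ X, ‖fderiv ℝ f X‖ ≤ C * √(f X)) (X Y : F) :
    √(f X) ≤ √(f Y) + C / 2 * ‖X - Y‖ := by
  have hderiv : ∀ Z, HasFDerivAt (fun Z => √(f Z)) ((1 / (2 * √(f Z))) • fderiv ℝ f Z) Z :=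
    fun Z => (hf Z).hasFDerivAt.sqrt (hpos Z).ne'
  have hbound : ∀ Z, ‖fderiv ℝ (fun Z => √(f Z)) Z‖ ≤ C / 2 := by
    intro Z
    have hsqrt : 0 < √(f Z) := Real.sqrt_pos.mpr (hpos Z)
    rw [(hderiv Z).fderiv, norm_smul, Real.norm_of_nonneg (by positivity)]
    calc 1 / (2 * √(f Z)) * ‖fderiv ℝ f Z‖ ≤ 1 / (2 * √(f Z)) * (C * √(f Z)) := by
          gcongr; exact hC Z
      _ = C / 2 := by field_simp
  have hlip := convex_univ.norm_image_sub_le_of_norm_fderiv_le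
    (fun Z _ => (hderiv Z).differentiableAt) (fun Z _ => hbound Z) (Set.mem_univ Y)
    (Set.mem_univ X)
  linarith [le_abs_self (√(f X) - √(f Y)), Real.norm_eq_abs (√(f X) - √(f Y))]

lemma isOrderFunction_of_norm_fderiv_le_mul_sqrt (hf : Differentiable ℝ f)
    (hf1 : ∀ X, 1 ≤ f X) (hC : ∀ X, ‖fderiv ℝ f X‖ ≤ C * √(f X)) : IsOrderFunction f := by
  have hpos : ∀ X, 0 < f X := fun X => one_pos.trans_le (hf1 X)
  refine ⟨hpos, 2 + C ^ 2 / 2, by positivity, fun X Y => ?_⟩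
  have hsqrt := sqrt_le_sqrt_add_of_norm_fderiv_le hf hpos hC X Y
  have hsq : f X ≤ (√(f Y) + C / 2 * ‖X - Y‖) ^ 2 := by
    rw [← Real.sq_sqrt (hpos X).le]
    gcongr
  have hY : √(f Y) ^ 2 = f Y := Real.sq_sqrt (hpos Y).le
  nlinarith [sq_nonneg (√(f Y) - C / 2 * ‖X - Y‖), hf1 Y, sq_nonneg (C * ‖X - Y‖)]

end OrderFunction

section Gradient

variable {E : Type*} [NormedAddCommGroup E] [InnerProductSpace ℝ E] [CompleteSpace E]
  {f : E → ℝ} {M : ℝ}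

lemma norm_gradient_eq_norm_fderiv (f : E → ℝ) (x : E) : ‖gradient f x‖ = ‖fderiv ℝ f x‖ :=
  (toDual ℝ E).symm.norm_map _

lemma exists_hasFDerivAt_gradient_norm_le (hf : ContDiff ℝ 2 f)
    (hM : ∀ z, ‖iteratedFDeriv ℝ 2 f z‖ ≤ M) (x : E) :
    ∃ L : E →L[ℝ] E, HasFDerivAt (gradient f) L x ∧ ‖L‖ ≤ M := by
  let G : StrongDual ℝ E →L[ℝ] E := (toDual ℝ E).symm.toLinearIsometry.toContinuousLinearMap
  have hG : ‖G‖ ≤ 1 := LinearIsometry.norm_toContinuousLinearMap_le _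
  refine ⟨G.comp (fderiv ℝ (fderiv ℝ f) x),
    G.hasFDerivAt.comp x (differentiable_fderiv_of_contDiff_two hf x).hasFDerivAt, ?_⟩
  calc ‖G.comp (fderiv ℝ (fderiv ℝ f) x)‖ ≤ 1 * M :=
        (G.opNorm_comp_le _).trans (mul_le_mul hG
          ((norm_fderiv_fderiv_eq_norm_iteratedFDeriv_two f x).trans_le (hM x))
          (norm_nonneg _) zero_le_one)
    _ = M := one_mul M

end Gradient

lemma norm_two_smul_innerSL_comp_le {F G : Type*} [NormedAddCommGroup F] [InnerProductSpace ℝ F]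
    [NormedAddCommGroup G] [NormedSpace ℝ G] (v : F) (L : G →L[ℝ] F) :
    ‖2 • (innerSL ℝ v).comp L‖ ≤ 2 * (‖v‖ * ‖L‖) :=
  calc ‖2 • (innerSL ℝ v).comp L‖ ≤ 2 * ‖(innerSL ℝ v).comp L‖ := by
        simpa using norm_nsmul_le (n := 2) (a := (innerSL ℝ v).comp L)
    _ ≤ 2 * (‖v‖ * ‖L‖) := by
        gcongr
        exact ((innerSL ℝ v).opNorm_comp_le L).trans_eq (by rw [innerSL_apply_norm])

section ProdL2

variable {p : ENNReal} [Fact (1 ≤ p)] (α β : Type*) [NormedAddCommGroup α] [NormedSpace ℝ α]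
  [NormedAddCommGroup β] [NormedSpace ℝ β]

lemma WithLp.norm_fstL_le_one : ‖WithLp.fstL p ℝ α β‖ ≤ 1 :=
  ContinuousLinearMap.opNorm_le_bound _ zero_le_one fun Y =>
    (WithLp.norm_fst_le α Y).trans_eq (one_mul _).symm

lemma WithLp.norm_sndL_le_one : ‖WithLp.sndL p ℝ α β‖ ≤ 1 :=
  ContinuousLinearMap.opNorm_le_bound _ zero_le_one fun Y =>
    (WithLp.norm_snd_le α Y).trans_eq (one_mul _).symm

end ProdL2

section MagneticWeight

variable {E : Type*} [NormedAddCommGroup E] [InnerProductSpace ℝ E] [CompleteSpace E]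
  {A : E → E} {V₁ V₂ : E → ℝ} {M : ℝ}

def magneticWeight (A : E → E) (V₁ V₂ : E → ℝ) (X : WithLp 2 (E × E)) : ℝ :=
  1 + ‖X.snd - A X.fst‖ ^ 2 + V₁ X.fst + ‖gradient V₂ X.fst‖ ^ 2

lemma one_le_magneticWeight (hV₁ : ∀ x, 0 ≤ V₁ x) (X : WithLp 2 (E × E)) :
    1 ≤ magneticWeight A V₁ V₂ X := by
  unfold magneticWeight
  nlinarith [hV₁ X.fst, sq_nonneg ‖X.snd - A X.fst‖, sq_nonneg ‖gradient V₂ X.fst‖]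

lemma exists_hasFDerivAt_magneticWeight_norm_le (hA : Differentiable ℝ A)
    (hA' : ∀ x, ‖fderiv ℝ A x‖ ≤ M) (hV₁ : ContDiff ℝ 2 V₁) (hV₁0 : ∀ x, 0 ≤ V₁ x)
    (hV₁'' : ∀ x, ‖iteratedFDeriv ℝ 2 V₁ x‖ ≤ M) (hV₂ : ContDiff ℝ 2 V₂)
    (hV₂'' : ∀ x, ‖iteratedFDeriv ℝ 2 V₂ x‖ ≤ M) (X : WithLp 2 (E × E)) :
    ∃ D : WithLp 2 (E × E) →L[ℝ] ℝ, HasFDerivAt (magneticWeight A V₁ V₂) D X ∧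
      ‖D‖ ≤ (2 + 4 * M + 2 * √M) * √(magneticWeight A V₁ V₂ X) := by
  set x := X.fst
  set q := X.snd - A x
  set g := gradient V₂ x
  set w := magneticWeight A V₁ V₂ X with hw
  have hM0 : 0 ≤ M := (norm_nonneg _).trans (hA' x)
  let P := WithLp.fstL 2 ℝ E E
  let Q := WithLp.sndL 2 ℝ E E
  have hP : ‖P‖ ≤ 1 := WithLp.norm_fstL_le_one E E
  have hQ : ‖Q‖ ≤ 1 := WithLp.norm_sndL_le_one E E
  obtain ⟨L, hL, hLM⟩ := exists_hasFDerivAt_gradient_norm_le hV₂ hV₂'' x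
  have hq : HasFDerivAt (fun Y : WithLp 2 (E × E) => Y.snd - A Y.fst)
      (Q - (fderiv ℝ A x).comp P) X :=
    Q.hasFDerivAt.sub ((hA x).hasFDerivAt.comp X P.hasFDerivAt)
  have hg : HasFDerivAt (fun Y : WithLp 2 (E × E) => gradient V₂ Y.fst) (L.comp P) X :=
    hL.comp (g := gradient V₂) X P.hasFDerivAt
  have hV : HasFDerivAt (fun Y : WithLp 2 (E × E) => V₁ Y.fst) ((fderiv ℝ V₁ x).comp P) X :=
    (hV₁.differentiable two_ne_zero x).hasFDerivAt.comp X P.hasFDerivAt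
  refine ⟨_, ((hq.norm_sq.const_add 1).add hV).add hg.norm_sq, ?_⟩
  have hq_le : ‖q‖ ≤ √w :=
    Real.le_sqrt_of_sq_le (by rw [hw, magneticWeight]; nlinarith [hV₁0 x, sq_nonneg ‖g‖])
  have hg_le : ‖g‖ ≤ √w :=
    Real.le_sqrt_of_sq_le (by rw [hw, magneticWeight]; nlinarith [hV₁0 x, sq_nonneg ‖q‖])
  have hV₁_le : ‖fderiv ℝ V₁ x‖ ≤ 2 * √M * √w := by
    calc ‖fderiv ℝ V₁ x‖ ≤ 2 * √(M * V₁ x) :=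
          norm_fderiv_le_two_mul_sqrt_of_nonneg hV₁ hV₁'' hV₁0 x
      _ ≤ 2 * √(M * w) := by
          gcongr
          rw [hw, magneticWeight]; nlinarith [sq_nonneg ‖g‖, sq_nonneg ‖q‖]
      _ = 2 * √M * √w := by rw [Real.sqrt_mul hM0, mul_assoc]
  have hAP : ‖Q - (fderiv ℝ A x).comp P‖ ≤ 1 + M := by
    calc _ ≤ ‖Q‖ + ‖(fderiv ℝ A x).comp P‖ := norm_sub_le Q ((fderiv ℝ A x).comp P)
      _ ≤ 1 + M * 1 := add_le_add hQ
          (((fderiv ℝ A x).opNorm_comp_le P).trans (mul_le_mul (hA' x) hP (norm_nonneg _) hM0))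
      _ = 1 + M := by ring
  have hLP : ‖L.comp P‖ ≤ M :=
    (L.opNorm_comp_le P).trans (by nlinarith [norm_nonneg L, norm_nonneg P])
  calc _ ≤ 2 * (‖q‖ * ‖Q - (fderiv ℝ A x).comp P‖) + ‖fderiv ℝ V₁ x‖ * ‖P‖
        + 2 * (‖g‖ * ‖L.comp P‖) := by
        refine (norm_add₃_le (E := WithLp 2 (E × E) →L[ℝ] ℝ)).trans ?_
        gcongr
        · exact norm_two_smul_innerSL_comp_le q _
        · exact (fderiv ℝ V₁ x).opNorm_comp_le P
        · exact norm_two_smul_innerSL_comp_le g _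
    _ ≤ 2 * (√w * (1 + M)) + 2 * √M * √w * 1 + 2 * (√w * M) := by gcongr
    _ = (2 + 4 * M + 2 * √M) * √w := by ring

lemma magneticWeight_norm_gradient_le_and_isOrderFunction (hA : Differentiable ℝ A)
    (hA' : ∀ x, ‖fderiv ℝ A x‖ ≤ M) (hV₁ : ContDiff ℝ 2 V₁) (hV₁0 : ∀ x, 0 ≤ V₁ x)
    (hV₁'' : ∀ x, ‖iteratedFDeriv ℝ 2 V₁ x‖ ≤ M) (hV₂ : ContDiff ℝ 2 V₂)
    (hV₂'' : ∀ x, ‖iteratedFDeriv ℝ 2 V₂ x‖ ≤ M) :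
    (∃ C > 0, ∀ X, ‖gradient (magneticWeight A V₁ V₂) X‖ ≤ C * √(magneticWeight A V₁ V₂ X)) ∧
      IsOrderFunction (magneticWeight A V₁ V₂) := by
  choose D hD hD_le using
    exists_hasFDerivAt_magneticWeight_norm_le hA hA' hV₁ hV₁0 hV₁'' hV₂ hV₂''
  have hfderiv_le : ∀ X, ‖fderiv ℝ (magneticWeight A V₁ V₂) X‖
      ≤ (2 + 4 * M + 2 * √M) * √(magneticWeight A V₁ V₂ X) :=
    fun X => (hD X).fderiv ▸ hD_le X
  have hM0 : 0 ≤ M := (norm_nonneg _).trans (hA' 0)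
  refine ⟨⟨2 + 4 * M + 2 * √M, by positivity, fun X => ?_⟩,
    isOrderFunction_of_norm_fderiv_le_mul_sqrt (fun X => (hD X).differentiableAt)
      (one_le_magneticWeight hV₁0) hfderiv_le⟩
  rw [norm_gradient_eq_norm_fderiv]
  exact hfderiv_le X

end MagneticWeight

theorem weight_is_order_function_general
    (n : ℕ) (A : EuclideanSpace ℝ (Fin n) → EuclideanSpace ℝ (Fin n))
    (V₁ V₂ : EuclideanSpace ℝ (Fin n) → ℝ) (M : ℝ)
    (hA : ContDiff ℝ 1 A) (hA' : ∀ x, ‖fderiv ℝ A x‖ ≤ M)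
    (hV₁ : ContDiff ℝ 2 V₁) (hV₂ : ContDiff ℝ 2 V₂)
    (hV₁pos : ∀ x, 0 ≤ V₁ x)
    (hV₁'' : ∀ x, ‖iteratedFDeriv ℝ 2 V₁ x‖ ≤ M)
    (hV₂'' : ∀ x, ‖iteratedFDeriv ℝ 2 V₂ x‖ ≤ M)
    (m : PhaseSpace n → ℝ)
    (hm : ∀ X, m X = 1 + ‖momPart X - A (posPart X)‖ ^ 2 + V₁ (posPart X)
        + ‖gradient V₂ (posPart X)‖ ^ 2) :
    (∃ C > 0, ∀ X, ‖gradient m X‖ ≤ C * (m X) ^ ((1 : ℝ)/2)) ∧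
    (∃ C' > 0, ∀ X Y : PhaseSpace n, m X ≤ C' * (1 + ‖X - Y‖ ^ 2) * m Y) := by
  obtain rfl : m = magneticWeight A V₁ V₂ := funext hm
  obtain ⟨hgrad, -, horder⟩ := magneticWeight_norm_gradient_le_and_isOrderFunction
    (hA.differentiable one_ne_zero) hA' hV₁ hV₁pos hV₁'' hV₂ hV₂''
  simpa only [← Real.sqrt_eq_rpow] using ⟨hgrad, horder⟩

/-- for `m(x,ξ) = 1 + |ξ - A(x)|² + V₁(x) + |∇V₂(x)|²`, with `A` having
bounded Jacobian, `V₁ ≥ 0`, and the second derivatives of `V₁, V₂` bounded, one has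
`|∇m| ≤ C m^{1/2}`, and consequently `m` is an order function. -/
theorem weight_is_order_function
    (n : ℕ) (A : EuclideanSpace ℝ (Fin n) → EuclideanSpace ℝ (Fin n))
    (V₁ V₂ : EuclideanSpace ℝ (Fin n) → ℝ) (M : ℝ) (hM : 0 < M)
    (hA : ContDiff ℝ 1 A) (hA' : ∀ x, ‖fderiv ℝ A x‖ ≤ M)
    (hV₁ : ContDiff ℝ 2 V₁) (hV₂ : ContDiff ℝ 2 V₂)
    (hV₁pos : ∀ x, 0 ≤ V₁ x)
    (hV₁'' : ∀ x, ‖iteratedFDeriv ℝ 2 V₁ x‖ ≤ M)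
    (hV₂'' : ∀ x, ‖iteratedFDeriv ℝ 2 V₂ x‖ ≤ M)
    (m : PhaseSpace n → ℝ)
    (hm : ∀ X, m X = 1 + ‖momPart X - A (posPart X)‖ ^ 2 + V₁ (posPart X)
        + ‖gradient V₂ (posPart X)‖ ^ 2) :
    (∃ C > 0, ∀ X, ‖gradient m X‖ ≤ C * (m X) ^ ((1 : ℝ)/2)) ∧
    (∃ C' > 0, ∀ X Y : PhaseSpace n, m X ≤ C' * (1 + ‖X - Y‖ ^ 2) * m Y) :=
  weight_is_order_function_general n A V₁ V₂ M hA hA' hV₁ hV₂ hV₁pos hV₁'' hV₂'' m hm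
end
end

section
/- Let A = (A_1, …, A_n) : ℝ^n → ℝ^n be smooth with ∇A_j(x) = O(1) and ∂^α A_j(x) = O(⟨x⟩^{−1}) for all multi-indices |α| ≥ 2, and let V = V₁ + iV₂ with V₁, V₂ : ℝ^n → ℝ smooth, V₁ ≥ 0, ∂^α V(x) = O(1) for all |α| ≥ 2, and |V₂(x)| ≤ C₀(1 + V₁(x) + |∇V₂(x)|²) for all x. Define p(x,ξ) = (ξ − A(x))² + V₁(x) + iV₂(x) and m(x,ξ) = 1 + |ξ − A(x)|² + V₁(x) + |∇V₂(x)|². Then p belongs to the symbol class S(m): for every multi-index α ∈ ℕ^{2n} there is a constant C_α such that |∂^α_{x,ξ} p(x,ξ)| ≤ C_α·m(x,ξ) for all (x,ξ) ∈ ℝ^{2n}. -/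
noncomputable section

section Aux

variable {E F : Type*} [NormedAddCommGroup E] [NormedSpace ℝ E]
  [NormedAddCommGroup F] [NormedSpace ℝ F]

lemma norm_itfd_one (f : E → F) (x : E) :
    ‖iteratedFDeriv ℝ 1 f x‖ = ‖fderiv ℝ f x‖ := by
  rw [show (1:ℕ) = 0 + 1 from rfl, ← norm_iteratedFDeriv_fderiv, norm_iteratedFDeriv_zero]

lemma clm_itfd_zero (L : E →L[ℝ] F) {j : ℕ} (hj : 2 ≤ j) (x : E) :
    ‖iteratedFDeriv ℝ j (⇑L) x‖ = 0 := by
  obtain ⟨i, rfl⟩ : ∃ i, j = i + 1 := ⟨j - 1, by omega⟩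
  rw [← norm_iteratedFDeriv_fderiv]
  have : fderiv ℝ (⇑L) = fun _ : E => L := funext fun y => L.fderiv
  rw [this, iteratedFDeriv_const_of_ne (by omega)]
  simp

/-- Multiplication by `I` as a real-linear isometry `ℝ → ℂ`. -/
def mulILI : ℝ →ₗᵢ[ℝ] ℂ where
  toLinearMap :=
    { toFun := fun r => Complex.I * (r : ℂ)
      map_add' := by intro a b; push_cast; ring
      map_smul' := by intro c a; simp [Complex.real_smul]; ring }
  norm_map' := by intro r; simp

/-- Landau-type inequality: a nonnegative `C^2` function with bounded second derivative
satisfies `‖∇f‖² ≤ 2(M+1) f`. -/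
lemma landau (f : E → ℝ) (hf : ContDiff ℝ (⊤ : ℕ∞) f) (h0 : ∀ x, 0 ≤ f x) (M : ℝ)
    (hM : ∀ x, ‖iteratedFDeriv ℝ 2 f x‖ ≤ M) (x : E) :
    ‖fderiv ℝ f x‖ ^ 2 ≤ 2 * (M + 1) * f x := by
  have hM0 : 0 ≤ M := le_trans (norm_nonneg _) (hM x)
  set K : ℝ := M + 1 with hK
  have hKpos : 0 < K := by positivity
  have hfd : Differentiable ℝ f := hf.differentiable (by norm_cast)
  have hF2 : Differentiable ℝ (fderiv ℝ f) :=
    (hf.fderiv_right (m := 1) (by norm_cast)).differentiable one_ne_zero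
  -- key pointwise inequality along directions
  have key : ∀ v : E, ‖v‖ ≤ 1 → fderiv ℝ f x v ≤ 0 →
      (fderiv ℝ f x v) ^ 2 ≤ 2 * K * f x := by
    intro v hv ha
    set a : ℝ := fderiv ℝ f x v with haid
    set γ : ℝ → E := fun s => x + s • v with hγdef
    have hγ : ∀ s : ℝ, HasDerivAt γ v s := by
      intro s
      simpa [hγdef] using ((hasDerivAt_id s).smul_const v).const_add x
    have hγ0 : γ 0 = x := by simp [hγdef]
    set g : ℝ → ℝ := fun s => f (γ s) with hgdef
    set g' : ℝ → ℝ := fun s => fderiv ℝ f (γ s) v with hg'def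
    have hg : ∀ s : ℝ, HasDerivAt g (g' s) s := fun s =>
      (hfd (γ s)).hasFDerivAt.comp_hasDerivAt s (hγ s)
    set g'' : ℝ → ℝ := fun s => fderiv ℝ (fderiv ℝ f) (γ s) v v with hg''def
    have hg' : ∀ s : ℝ, HasDerivAt g' (g'' s) s := by
      intro s
      have h1 : HasDerivAt (fun t => fderiv ℝ f (γ t)) (fderiv ℝ (fderiv ℝ f) (γ s) v) s :=
        (hF2 (γ s)).hasFDerivAt.comp_hasDerivAt s (hγ s)
      have h2 := h1.clm_apply (hasDerivAt_const s v)
      simpa using h2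
    have hg''le : ∀ s : ℝ, |g'' s| ≤ M := by
      intro s
      have he : g'' s = iteratedFDeriv ℝ 2 f (γ s) ![v, v] := by
        rw [iteratedFDeriv_two_apply]
        simp [hg''def]
      rw [← Real.norm_eq_abs, he]
      calc ‖iteratedFDeriv ℝ 2 f (γ s) ![v, v]‖
          ≤ ‖iteratedFDeriv ℝ 2 f (γ s)‖ * ∏ i : Fin 2, ‖(![v, v]) i‖ :=
            (iteratedFDeriv ℝ 2 f (γ s)).le_opNorm _
        _ ≤ M * 1 := by
            apply mul_le_mul (hM _) ?_ (by positivity) hM0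
            rw [Fin.prod_univ_two]
            simp only [Matrix.cons_val_zero, Matrix.cons_val_one, Matrix.head_cons]
            calc ‖v‖ * ‖v‖ ≤ 1 * 1 := by
                  apply mul_le_mul hv hv (norm_nonneg _) zero_le_one
              _ = 1 := by ring
        _ = M := by ring
    -- comparison function
    set h' : ℝ → ℝ := fun s => a + K * s - g' s with hh'def
    have hh' : ∀ s : ℝ, HasDerivAt h' (K - g'' s) s := by
      intro s
      have : HasDerivAt (fun t : ℝ => a + K * t) K s := by
        simpa using (hasDerivAt_id s).const_mul K |>.const_add a
      exact this.sub (hg' s)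
    have hh'mono : Monotone h' := by
      apply monotone_of_deriv_nonneg (fun s => (hh' s).differentiableAt)
      intro s
      rw [(hh' s).deriv]
      have := hg''le s
      have : g'' s ≤ M := le_of_abs_le this
      linarith
    have hg'0 : g' 0 = a := by simp [hg'def, hγ0, haid]
    have hh'0 : h' 0 = 0 := by simp [hh'def, hg'0]
    set h : ℝ → ℝ := fun s => f x + a * s + K / 2 * s ^ 2 - g s with hhdef
    have hh : ∀ s : ℝ, HasDerivAt h (h' s) s := by
      intro s
      have h1 : HasDerivAt (fun t : ℝ => f x + a * t + K / 2 * t ^ 2)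
          (a + K * s) s := by
        have := ((hasDerivAt_pow 2 s).const_mul (K / 2)).const_add (f x + a * s)
        have h2 : HasDerivAt (fun t : ℝ => a * t) a s := by
          simpa using (hasDerivAt_id s).const_mul a
        have h3 : HasDerivAt (fun t : ℝ => K / 2 * t ^ 2) (K / 2 * (2 * s ^ 1)) s :=
          (hasDerivAt_pow 2 s).const_mul (K / 2)
        have := (h2.const_add (f x)).add h3
        exact this.congr_deriv (by ring)
      have := h1.sub (hg s)
      exact this
    -- h is monotone on [0, ∞)
    have hhmono : MonotoneOn h (Set.Ici (0:ℝ)) := by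
      apply monotoneOn_of_deriv_nonneg (convex_Ici 0)
        (fun s _ => (hh s).differentiableAt.continuousAt.continuousWithinAt)
        (fun s _ => (hh s).differentiableAt.differentiableWithinAt)
      intro s hs
      rw [(hh s).deriv, ← hh'0]
      apply hh'mono
      rw [interior_Ici] at hs
      exact le_of_lt hs
    set t : ℝ := -a / K with htdef
    have ht : 0 ≤ t := div_nonneg (by linarith) hKpos.le
    have hg0 : g 0 = f x := by simp [hgdef, hγ0]
    have hh0 : h 0 = 0 := by simp [hhdef, hg0]
    have : h 0 ≤ h t := hhmono Set.self_mem_Ici ht ht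
    rw [hh0] at this
    have hgt : 0 ≤ g t := h0 _
    have hle : 0 ≤ f x + a * t + K / 2 * t ^ 2 := by
      simp only [hhdef] at this; linarith
    rw [htdef] at hle
    have h2 : (0:ℝ) ≤ 2 * K * (f x + a * (-a / K) + K / 2 * (-a / K) ^ 2) :=
      mul_nonneg (by linarith) hle
    have h3 : 2 * K * (f x + a * (-a / K) + K / 2 * (-a / K) ^ 2)
        = 2 * K * f x - a ^ 2 := by
      field_simp
      ring
    linarith [h3 ▸ h2]
  -- conclude the operator norm bound
  have hnn : 0 ≤ 2 * K * f x := mul_nonneg (by linarith) (h0 x)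
  have hb : ‖fderiv ℝ f x‖ ≤ Real.sqrt (2 * K * f x) := by
    apply ContinuousLinearMap.opNorm_le_bound _ (Real.sqrt_nonneg _)
    intro v
    rcases eq_or_ne v 0 with rfl | hv
    · simp
    · set w : E := ‖v‖⁻¹ • v with hwdef
      have hw : ‖w‖ = 1 := by
        rw [hwdef, norm_smul]
        simp [norm_ne_zero_iff.mpr hv]
      set a : ℝ := fderiv ℝ f x w with haid
      have key' : a ^ 2 ≤ 2 * K * f x := by
        rcases le_or_gt a 0 with h | h
        · exact key w hw.le h
        · have hneg : fderiv ℝ f x (-w) ≤ 0 := by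
            rw [map_neg]; linarith
          have := key (-w) (by rw [norm_neg, hw]) hneg
          rwa [map_neg, neg_sq] at this
      have habs : |a| ≤ Real.sqrt (2 * K * f x) := by
        rw [← Real.sqrt_sq_eq_abs]
        exact Real.sqrt_le_sqrt key'
      have hveq : fderiv ℝ f x v = ‖v‖ * a := by
        have hvw : (‖v‖ : ℝ) • w = v := by
          rw [hwdef, smul_smul, mul_inv_cancel₀ (norm_ne_zero_iff.mpr hv), one_smul]
        conv_lhs => rw [← hvw]
        rw [map_smul, smul_eq_mul]
      rw [hveq, Real.norm_eq_abs, abs_mul, abs_of_nonneg (norm_nonneg v)]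
      calc ‖v‖ * |a| ≤ ‖v‖ * Real.sqrt (2 * K * f x) :=
            mul_le_mul_of_nonneg_left habs (norm_nonneg v)
        _ = Real.sqrt (2 * K * f x) * ‖v‖ := by ring
  calc ‖fderiv ℝ f x‖ ^ 2 ≤ Real.sqrt (2 * K * f x) ^ 2 :=
        pow_le_pow_left₀ (norm_nonneg _) hb 2
    _ = 2 * K * f x := Real.sq_sqrt hnn

end Aux

set_option maxHeartbeats 2000000
set_option synthInstance.maxHeartbeats 400000

/-- under the growth assumptions (1.3)-(1.6) on `A` and `V = V₁ + iV₂`,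
the magnetic Schrödinger symbol `p(x,ξ) = (ξ - A(x))² + V(x)` belongs to the symbol
class `S(m)` with `m(x,ξ) = 1 + |ξ - A(x)|² + V₁(x) + |∇V₂(x)|²`: every derivative of
`p` of order `k` is bounded by `C_k · m`. -/
theorem symbol_in_class_S_m
    (n : ℕ) (A : EuclideanSpace ℝ (Fin n) → EuclideanSpace ℝ (Fin n))
    (V₁ V₂ : EuclideanSpace ℝ (Fin n) → ℝ)
    (hA : ContDiff ℝ (⊤ : ℕ∞) A) (hV₁ : ContDiff ℝ (⊤ : ℕ∞) V₁) (hV₂ : ContDiff ℝ (⊤ : ℕ∞) V₂)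
    (hV₁pos : ∀ x, 0 ≤ V₁ x)
    (hA1 : ∃ C, ∀ x, ‖fderiv ℝ A x‖ ≤ C)
    (hA2 : ∀ k : ℕ, 2 ≤ k → ∃ C, ∀ x,
      ‖iteratedFDeriv ℝ k A x‖ ≤ C * (1 + ‖x‖ ^ 2) ^ (-(1 : ℝ)/2))
    (hV : ∀ k : ℕ, 2 ≤ k → ∃ C, ∀ x,
      ‖iteratedFDeriv ℝ k (fun y => (V₁ y : ℂ) + Complex.I * (V₂ y : ℂ)) x‖ ≤ C)
    (hV₂bdd : ∃ C₀, ∀ x, |V₂ x| ≤ C₀ * (1 + V₁ x + ‖gradient V₂ x‖ ^ 2))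
    (p : PhaseSpace n → ℂ)
    (hp : ∀ X, p X = ((‖momPart X - A (posPart X)‖ ^ 2 + V₁ (posPart X) : ℝ) : ℂ)
        + Complex.I * (V₂ (posPart X) : ℂ))
    (m : PhaseSpace n → ℝ)
    (hm : ∀ X, m X = 1 + ‖momPart X - A (posPart X)‖ ^ 2 + V₁ (posPart X)
        + ‖gradient V₂ (posPart X)‖ ^ 2) :
    ∀ k : ℕ, ∃ C, ∀ X, ‖iteratedFDeriv ℝ k p X‖ ≤ C * m X := by
  -- the position and momentum projections as continuous linear maps
  let Pl : PhaseSpace n →L[ℝ] EuclideanSpace ℝ (Fin n) :=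
    (ContinuousLinearMap.fst ℝ _ _).comp
      (WithLp.prodContinuousLinearEquiv 2 ℝ _ _).toContinuousLinearMap
  let Ll : PhaseSpace n →L[ℝ] EuclideanSpace ℝ (Fin n) :=
    (ContinuousLinearMap.snd ℝ _ _).comp
      (WithLp.prodContinuousLinearEquiv 2 ℝ _ _).toContinuousLinearMap
  have hPl : ∀ X : PhaseSpace n, posPart X = Pl X := fun _ => rfl
  have hLl : ∀ X : PhaseSpace n, momPart X = Ll X := fun _ => rfl
  -- the complex potential
  set VC : EuclideanSpace ℝ (Fin n) → ℂ :=
    fun y => (V₁ y : ℂ) + Complex.I * (V₂ y : ℂ) with hVCdef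
  have hVCsm : ContDiff ℝ (⊤ : ℕ∞) VC := by
    apply ContDiff.add
    · exact hV₁.continuousLinearMap_comp Complex.ofRealCLM
    · exact (contDiff_const).mul (hV₂.continuousLinearMap_comp Complex.ofRealCLM)
  -- the momentum field B
  set B : PhaseSpace n → EuclideanSpace ℝ (Fin n) :=
    fun X => momPart X - A (posPart X) with hBdef
  have hBsm : ContDiff ℝ (⊤ : ℕ∞) B := by
    have : ContDiff ℝ (⊤ : ℕ∞) fun X : PhaseSpace n => Ll X - A (Pl X) :=
      (Ll.contDiff).sub (hA.comp Pl.contDiff)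
    exact this
  -- the kinetic term
  set q : PhaseSpace n → ℝ := fun X => inner ℝ (B X) (B X) with hqdef
  have hqsm : ContDiff ℝ (⊤ : ℕ∞) q := hBsm.inner ℝ hBsm
  have hqval : ∀ X, q X = ‖B X‖ ^ 2 := fun X => real_inner_self_eq_norm_sq (B X)
  -- p is the sum of the two pieces
  have hpeq : p = fun X => (⇑Complex.ofRealCLM ∘ q) X + (VC ∘ ⇑Pl) X := by
    funext X
    rw [hp X]
    simp only [Function.comp_apply, Complex.ofRealCLM_apply]
    have hBX : B X = momPart X - A (posPart X) := rfl
    rw [hqval X, hBX, ← hPl X]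
    push_cast
    ring
  -- bounds on iterated derivatives of B
  have hAd : Differentiable ℝ A := hA.differentiable (by norm_cast)
  have claim_B : ∀ j : ℕ, ∃ c, 0 ≤ c ∧
      ∀ X, ‖iteratedFDeriv ℝ j B X‖ ≤ c * (1 + ‖B X‖) := by
    intro j
    match j with
    | 0 =>
      refine ⟨1, zero_le_one, fun X => ?_⟩
      rw [norm_iteratedFDeriv_zero]
      linarith [norm_nonneg (B X)]
    | 1 =>
      obtain ⟨CA, hCA⟩ := hA1
      have hCA0 : 0 ≤ CA := le_trans (norm_nonneg _) (hCA 0)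
      refine ⟨‖Ll‖ + CA * ‖Pl‖, by positivity, fun X => ?_⟩
      rw [norm_itfd_one]
      have h1 : HasFDerivAt (fun Y : PhaseSpace n => A (Pl Y))
          ((fderiv ℝ A (Pl X)).comp Pl) X :=
        (hAd (Pl X)).hasFDerivAt.comp X Pl.hasFDerivAt
      have h2 : HasFDerivAt B (Ll - (fderiv ℝ A (Pl X)).comp Pl) X :=
        Ll.hasFDerivAt.sub h1
      rw [h2.fderiv]
      have h3 : ‖Ll - (fderiv ℝ A (Pl X)).comp Pl‖ ≤ ‖Ll‖ + CA * ‖Pl‖ := by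
        refine (norm_sub_le _ _).trans ?_
        have h4 := ContinuousLinearMap.opNorm_comp_le (fderiv ℝ A (Pl X)) Pl
        have h5 : ‖fderiv ℝ A (Pl X)‖ * ‖Pl‖ ≤ CA * ‖Pl‖ :=
          mul_le_mul_of_nonneg_right (hCA _) (norm_nonneg _)
        linarith
      refine h3.trans ?_
      exact le_mul_of_one_le_right (by positivity) (by linarith [norm_nonneg (B X)])
    | (i+2) =>
      obtain ⟨CA, hCA⟩ := hA2 (i+2) (by omega)
      refine ⟨‖Pl‖ ^ (i+2) * max CA 0, by positivity, fun X => ?_⟩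
      have hfun : B = fun X : PhaseSpace n => (⇑Ll) X + (-(A ∘ ⇑Pl)) X := by
        funext Y
        show momPart Y - A (posPart Y) = Ll Y + -(A (Pl Y))
        rw [hLl Y, hPl Y, sub_eq_add_neg]
      have hLsm : ContDiff ℝ ((i+2 : ℕ) : WithTop ℕ∞) (⇑Ll) := Ll.contDiff
      have hgsm : ContDiff ℝ ((i+2 : ℕ) : WithTop ℕ∞) (-(A ∘ ⇑Pl)) :=
        ((hA.comp Pl.contDiff).neg).of_le (WithTop.coe_le_coe.mpr le_top)
      rw [hfun, iteratedFDeriv_add_apply' (hLsm.contDiffAt (x := X)) (hgsm.contDiffAt (x := X))]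
      refine (norm_add_le _ _).trans ?_
      rw [clm_itfd_zero Ll (by omega), zero_add]
      rw [iteratedFDeriv_neg_apply, norm_neg]
      rw [Pl.iteratedFDeriv_comp_right hA X ((WithTop.coe_le_coe.mpr le_top))]
      refine (ContinuousMultilinearMap.norm_compContinuousLinearMap_le _ _).trans ?_
      have hprod : (∏ _i : Fin (i+2), ‖Pl‖) = ‖Pl‖ ^ (i+2) := by
        simp [Finset.prod_const]
      rw [hprod]
      have ht : (0:ℝ) ≤ (1 + ‖Pl X‖ ^ 2) ^ (-(1 : ℝ)/2) := by positivity
      have ht1 : (1 + ‖Pl X‖ ^ 2) ^ (-(1 : ℝ)/2) ≤ 1 := by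
        apply Real.rpow_le_one_of_one_le_of_nonpos
        · nlinarith [sq_nonneg ‖Pl X‖]
        · norm_num
      have hfin : ‖iteratedFDeriv ℝ (i+2) A (Pl X)‖ ≤ max CA 0 := by
        refine (hCA (Pl X)).trans ?_
        calc CA * (1 + ‖Pl X‖ ^ 2) ^ (-(1 : ℝ)/2)
            ≤ max CA 0 * (1 + ‖Pl X‖ ^ 2) ^ (-(1 : ℝ)/2) :=
              mul_le_mul_of_nonneg_right (le_max_left _ _) ht
          _ ≤ max CA 0 * 1 :=
              mul_le_mul_of_nonneg_left ht1 (le_max_right _ _)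
          _ = max CA 0 := mul_one _
      calc ‖iteratedFDeriv ℝ (i+2) A (Pl X)‖ * ‖Pl‖ ^ (i+2)
          ≤ max CA 0 * ‖Pl‖ ^ (i+2) :=
            mul_le_mul_of_nonneg_right hfin (by positivity)
        _ = ‖Pl‖ ^ (i+2) * max CA 0 := by ring
        _ ≤ ‖Pl‖ ^ (i+2) * max CA 0 * (1 + ‖B X‖) :=
            le_mul_of_one_le_right (by positivity) (by linarith [norm_nonneg (B X)])
  -- bounds on iterated derivatives of VC
  have hgradnorm : ∀ y, ‖gradient V₂ y‖ = ‖fderiv ℝ V₂ y‖ := by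
    intro y
    rw [gradient]
    exact LinearIsometryEquiv.norm_map _ _
  have hden : ∀ y, (1:ℝ) ≤ 1 + V₁ y + ‖gradient V₂ y‖ ^ 2 := by
    intro y
    nlinarith [hV₁pos y, sq_nonneg ‖gradient V₂ y‖]
  have claim_VC : ∀ j : ℕ, ∃ c, 0 ≤ c ∧
      ∀ y, ‖iteratedFDeriv ℝ j VC y‖ ≤ c * (1 + V₁ y + ‖gradient V₂ y‖ ^ 2) := by
    intro j
    match j with
    | 0 =>
      obtain ⟨C₀, hC₀⟩ := hV₂bdd
      refine ⟨1 + max C₀ 0, by positivity, fun y => ?_⟩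
      rw [norm_iteratedFDeriv_zero]
      have h1 : ‖VC y‖ ≤ |V₁ y| + |V₂ y| := by
        refine (norm_add_le _ _).trans ?_
        simp [Complex.norm_real]
      have h2 : |V₂ y| ≤ max C₀ 0 * (1 + V₁ y + ‖gradient V₂ y‖ ^ 2) := by
        refine (hC₀ y).trans ?_
        exact mul_le_mul_of_nonneg_right (le_max_left _ _) (by linarith [hden y])
      have h3 : |V₁ y| ≤ 1 * (1 + V₁ y + ‖gradient V₂ y‖ ^ 2) := by
        rw [abs_of_nonneg (hV₁pos y), one_mul]
        nlinarith [sq_nonneg ‖gradient V₂ y‖]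
      calc ‖VC y‖ ≤ |V₁ y| + |V₂ y| := h1
        _ ≤ 1 * (1 + V₁ y + ‖gradient V₂ y‖ ^ 2)
            + max C₀ 0 * (1 + V₁ y + ‖gradient V₂ y‖ ^ 2) := add_le_add h3 h2
        _ = (1 + max C₀ 0) * (1 + V₁ y + ‖gradient V₂ y‖ ^ 2) := by ring
    | 1 =>
      obtain ⟨C₂, hC₂⟩ := hV 2 le_rfl
      have hV₁eq : V₁ = (⇑Complex.reCLM ∘ VC) := by
        funext y
        simp [hVCdef]
      set M : ℝ := ‖(Complex.reCLM : ℂ →L[ℝ] ℝ)‖ * C₂ with hMdef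
      have hC₂0 : 0 ≤ C₂ := le_trans (norm_nonneg _) (hC₂ 0)
      have hM0 : 0 ≤ M := by positivity
      have hM : ∀ y, ‖iteratedFDeriv ℝ 2 V₁ y‖ ≤ M := by
        intro y
        conv_lhs => rw [hV₁eq]
        rw [Complex.reCLM.iteratedFDeriv_comp_left (hVCsm.contDiffAt (x := y)) (WithTop.coe_le_coe.mpr le_top)]
        refine (ContinuousLinearMap.norm_compContinuousMultilinearMap_le _ _).trans ?_
        exact mul_le_mul_of_nonneg_left (hC₂ y) (norm_nonneg _)
      have hLan := landau V₁ (hV₁.of_le (by simp)) hV₁pos M hM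
      refine ⟨M + 3, by linarith, fun y => ?_⟩
      -- split VC into its two isometric pieces
      have hsplit : ‖iteratedFDeriv ℝ 1 VC y‖
          ≤ ‖fderiv ℝ V₁ y‖ + ‖fderiv ℝ V₂ y‖ := by
        have hf1 : ContDiff ℝ ((1:ℕ) : WithTop ℕ∞) (fun y => ((V₁ y : ℝ) : ℂ)) :=
          (hV₁.continuousLinearMap_comp Complex.ofRealCLM).of_le (by simp)
        have hg1 : ContDiff ℝ ((1:ℕ) : WithTop ℕ∞) (fun y => Complex.I * ((V₂ y : ℝ) : ℂ)) :=
          ((contDiff_const).mul (hV₂.continuousLinearMap_comp Complex.ofRealCLM)).of_le (by simp)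
        have he : iteratedFDeriv ℝ 1 VC y
            = iteratedFDeriv ℝ 1 (fun y => ((V₁ y : ℝ) : ℂ)) y
              + iteratedFDeriv ℝ 1 (fun y => Complex.I * (V₂ y : ℂ)) y := by
          rw [hVCdef]
          exact iteratedFDeriv_add_apply' (hf1.contDiffAt (x := y)) (hg1.contDiffAt (x := y))
        rw [he]
        refine (norm_add_le _ _).trans ?_
        have e1 : (fun y => ((V₁ y : ℝ) : ℂ)) = ⇑Complex.ofRealLI ∘ V₁ := rfl
        have e2 : (fun y => Complex.I * ((V₂ y : ℝ) : ℂ)) = ⇑mulILI ∘ V₂ := rfl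
        rw [e1, e2, Complex.ofRealLI.norm_iteratedFDeriv_comp_left (hV₁.contDiffAt (x := y)) (by exact_mod_cast le_top),
          mulILI.norm_iteratedFDeriv_comp_left (hV₂.contDiffAt (x := y)) (by exact_mod_cast le_top),
          norm_itfd_one, norm_itfd_one]
      have hL := hLan y
      have hg := hgradnorm y
      have hr0 := norm_nonneg (fderiv ℝ V₁ y)
      have hs0 := norm_nonneg (fderiv ℝ V₂ y)
      have hv0 := hV₁pos y
      refine hsplit.trans ?_
      rw [hg]
      nlinarith [sq_nonneg (‖fderiv ℝ V₁ y‖ - 1), sq_nonneg (‖fderiv ℝ V₂ y‖ - 1),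
        mul_nonneg hM0 hv0, mul_nonneg hM0 (sq_nonneg ‖fderiv ℝ V₂ y‖)]
    | (i+2) =>
      obtain ⟨C, hC⟩ := hV (i+2) (by omega)
      refine ⟨max C 0, le_max_right _ _, fun y => ?_⟩
      calc ‖iteratedFDeriv ℝ (i+2) VC y‖ ≤ C := hC y
        _ ≤ max C 0 := le_max_left _ _
        _ ≤ max C 0 * (1 + V₁ y + ‖gradient V₂ y‖ ^ 2) :=
            le_mul_of_one_le_right (le_max_right _ _) (hden y)
  choose cB hcB0 hcB using claim_B
  choose cV hcV0 hcV using claim_VC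
  intro k
  set S : ℝ := ∑ i ∈ Finset.range (k+1), (k.choose i : ℝ) * cB i * cB (k-i) with hSdef
  have hS0 : 0 ≤ S := Finset.sum_nonneg fun i _ =>
    mul_nonneg (mul_nonneg (Nat.cast_nonneg _) (hcB0 i)) (hcB0 (k-i))
  set J : EuclideanSpace ℝ (Fin n) →L[ℝ] EuclideanSpace ℝ (Fin n) →L[ℝ] ℝ :=
    innerSL ℝ with hJdef
  refine ⟨‖Complex.ofRealCLM‖ * (‖J‖ * (S * 2)) + ‖Pl‖ ^ k * cV k, fun X => ?_⟩
  have hmX : m X = 1 + ‖B X‖ ^ 2 + V₁ (Pl X) + ‖gradient V₂ (Pl X)‖ ^ 2 := hm X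
  have hm1 : 1 + ‖B X‖ ^ 2 ≤ m X := by
    rw [hmX]; nlinarith [hV₁pos (Pl X), sq_nonneg ‖gradient V₂ (Pl X)‖]
  have hm2 : 1 + V₁ (Pl X) + ‖gradient V₂ (Pl X)‖ ^ 2 ≤ m X := by
    rw [hmX]; nlinarith [sq_nonneg ‖B X‖]
  have hm0 : 0 ≤ m X := by nlinarith [hm1, sq_nonneg ‖B X‖]
  rw [hpeq]
  have hg1sm : ContDiff ℝ ((k:ℕ) : WithTop ℕ∞) (⇑Complex.ofRealCLM ∘ q) :=
    (hqsm.continuousLinearMap_comp Complex.ofRealCLM).of_le (by exact_mod_cast le_top)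
  have hg2sm : ContDiff ℝ ((k:ℕ) : WithTop ℕ∞) (VC ∘ ⇑Pl) :=
    (hVCsm.comp Pl.contDiff).of_le (by exact_mod_cast le_top)
  rw [iteratedFDeriv_add_apply' (hg1sm.contDiffAt (x := X)) (hg2sm.contDiffAt (x := X))]
  refine (norm_add_le _ _).trans ?_
  have hT2 : ‖iteratedFDeriv ℝ k (VC ∘ ⇑Pl) X‖ ≤ ‖Pl‖ ^ k * cV k * m X := by
    rw [Pl.iteratedFDeriv_comp_right hVCsm X (by exact_mod_cast le_top)]
    refine (ContinuousMultilinearMap.norm_compContinuousLinearMap_le _ _).trans ?_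
    have hprod : (∏ _i : Fin k, ‖Pl‖) = ‖Pl‖ ^ k := by simp
    rw [hprod]
    calc ‖iteratedFDeriv ℝ k VC (Pl X)‖ * ‖Pl‖ ^ k
        ≤ (cV k * (1 + V₁ (Pl X) + ‖gradient V₂ (Pl X)‖ ^ 2)) * ‖Pl‖ ^ k :=
          mul_le_mul_of_nonneg_right (hcV k (Pl X)) (by positivity)
      _ ≤ (cV k * m X) * ‖Pl‖ ^ k :=
          mul_le_mul_of_nonneg_right (mul_le_mul_of_nonneg_left hm2 (hcV0 k)) (by positivity)
      _ = ‖Pl‖ ^ k * cV k * m X := by ring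
  have hT1 : ‖iteratedFDeriv ℝ k (⇑Complex.ofRealCLM ∘ q) X‖
      ≤ ‖Complex.ofRealCLM‖ * (‖J‖ * (S * (2 * m X))) := by
    rw [Complex.ofRealCLM.iteratedFDeriv_comp_left (hqsm.contDiffAt (x := X)) (by exact_mod_cast le_top)]
    refine (ContinuousLinearMap.norm_compContinuousMultilinearMap_le _ _).trans ?_
    refine mul_le_mul_of_nonneg_left ?_ (norm_nonneg _)
    have hqfun : q = fun y => J (B y) (B y) := by
      funext y
      rw [hqdef, hJdef, innerSL_apply_apply]
    have hq' : ‖iteratedFDeriv ℝ k q X‖ ≤ ‖J‖ * ∑ i ∈ Finset.range (k + 1),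
        (k.choose i : ℝ) * ‖iteratedFDeriv ℝ i B X‖ * ‖iteratedFDeriv ℝ (k - i) B X‖ := by
      rw [hqfun]
      exact J.norm_iteratedFDeriv_le_of_bilinear hBsm hBsm X (by exact_mod_cast (le_top : ((k : ℕ) : ℕ∞) ≤ ⊤))
    refine hq'.trans ?_
    refine mul_le_mul_of_nonneg_left ?_ J.opNorm_nonneg
    have hb0 : (0:ℝ) ≤ 1 + ‖B X‖ := by linarith [norm_nonneg (B X)]
    calc ∑ i ∈ Finset.range (k + 1),
          (k.choose i : ℝ) * ‖iteratedFDeriv ℝ i B X‖ * ‖iteratedFDeriv ℝ (k - i) B X‖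
        ≤ ∑ i ∈ Finset.range (k + 1),
          ((k.choose i : ℝ) * cB i * cB (k-i)) * ((1 + ‖B X‖) ^ 2) := by
          refine Finset.sum_le_sum fun i _ => ?_
          have h1 := hcB i X
          have h2 := hcB (k-i) X
          calc (k.choose i : ℝ) * ‖iteratedFDeriv ℝ i B X‖ * ‖iteratedFDeriv ℝ (k - i) B X‖
              ≤ (k.choose i : ℝ) * (cB i * (1 + ‖B X‖)) * (cB (k-i) * (1 + ‖B X‖)) := by
                refine mul_le_mul ?_ h2 (norm_nonneg _) ?_
                · exact mul_le_mul_of_nonneg_left h1 (Nat.cast_nonneg _)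
                · exact mul_nonneg (Nat.cast_nonneg _) (mul_nonneg (hcB0 i) hb0)
            _ = ((k.choose i : ℝ) * cB i * cB (k-i)) * ((1 + ‖B X‖) ^ 2) := by ring
      _ = S * ((1 + ‖B X‖) ^ 2) := by rw [← Finset.sum_mul]
      _ ≤ S * (2 * m X) := by
          refine mul_le_mul_of_nonneg_left ?_ hS0
          nlinarith [sq_nonneg (‖B X‖ - 1), hm1]
  calc ‖iteratedFDeriv ℝ k (⇑Complex.ofRealCLM ∘ q) X‖
        + ‖iteratedFDeriv ℝ k (VC ∘ ⇑Pl) X‖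
      ≤ ‖Complex.ofRealCLM‖ * (‖J‖ * (S * (2 * m X))) + ‖Pl‖ ^ k * cV k * m X :=
        add_le_add hT1 hT2
    _ = (‖Complex.ofRealCLM‖ * (‖J‖ * (S * 2)) + ‖Pl‖ ^ k * cV k) * m X := by ring

end
end

section
/- Let B₁ and B₂ be real symmetric n × n matrices such that B₁ is positive semidefinite and the complex matrix B₁ + iB₂ is invertible. Then there exists c > 0 such that (1/2)·(B₁y·y) + |B₂y|² ≥ c·|y|² for all y ∈ ℝ^n. -/
/-!
The quadratic form in question is that of `M = ½ B₁ + B₂ᵀ B₂`, a sum of two positive semidefinite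
matrices. A vector on which it vanishes lies in the kernels of both `B₁` and `B₂`, hence in the
kernel of `B₁ + i B₂`, so `M` is positive definite. A positive definite matrix dominates a positive
multiple of the identity, because its spectrum is a finite set of positive reals.
-/

open Matrix

namespace Matrix

open scoped ComplexOrder

variable {𝕜 m n : Type*} [RCLike 𝕜] [Fintype n]

open scoped MatrixOrder in
theorem PosDef.exists_pos_mul_dotProduct_le [DecidableEq n] {M : Matrix n n 𝕜}
    (hM : M.PosDef) : ∃ c > (0 : ℝ), ∀ x : n → 𝕜, (c : 𝕜) * (star x ⬝ᵥ x) ≤ star x ⬝ᵥ M *ᵥ x := by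
  cases isEmpty_or_nonempty n
  · exact ⟨1, one_pos, fun x => by simp⟩
  obtain ⟨c, hc, hcM⟩ := (CFC.exists_pos_algebraMap_le_iff hM.isHermitian).2
    fun _ hx => hM.isStrictlyPositive.spectrum_pos hx
  refine ⟨c, hc, fun x => ?_⟩
  have := (le_iff.1 hcM).dotProduct_mulVec_nonneg x
  rwa [Algebra.algebraMap_eq_smul_one, sub_mulVec, dotProduct_sub, sub_nonneg, smul_mulVec,
    one_mulVec, dotProduct_smul, RCLike.real_smul_eq_coe_mul] at this

theorem PosSemidef.posDef_add_of_forall_mulVec_eq_zero {A C : Matrix n n 𝕜} (hA : A.PosSemidef)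
    (hC : C.PosSemidef) (h : ∀ x, A *ᵥ x = 0 → C *ᵥ x = 0 → x = 0) : (A + C).PosDef := by
  refine .of_dotProduct_mulVec_pos (hA.add hC).isHermitian fun x hx =>
    ((hA.add hC).dotProduct_mulVec_nonneg x).lt_of_ne' fun h0 => hx ?_
  rw [add_mulVec, dotProduct_add] at h0
  obtain ⟨hAx, hCx⟩ := (add_eq_zero_iff_of_nonneg (hA.dotProduct_mulVec_nonneg x)
    (hC.dotProduct_mulVec_nonneg x)).1 h0
  exact h x ((hA.dotProduct_mulVec_zero_iff x).1 hAx) ((hC.dotProduct_mulVec_zero_iff x).1 hCx)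

theorem map_ofReal_add_I_smul_mulVec (A B : Matrix m n ℝ) (x : n → ℝ) :
    (A.map Complex.ofReal + Complex.I • B.map Complex.ofReal) *ᵥ (fun i => (x i : ℂ)) =
      fun i => ⟨(A *ᵥ x) i, (B *ᵥ x) i⟩ := by
  funext i
  apply Complex.ext <;> simp [mulVec, dotProduct, Complex.re_sum, Complex.im_sum]

theorem eq_zero_of_isUnit_map_ofReal_add_I_smul [DecidableEq n] {A B : Matrix n n ℝ}
    (hAB : IsUnit (A.map Complex.ofReal + Complex.I • B.map Complex.ofReal)) {x : n → ℝ}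
    (hA : A *ᵥ x = 0) (hB : B *ᵥ x = 0) : x = 0 := by
  have hx : (fun i => (x i : ℂ)) = 0 := mulVec_injective_iff_isUnit.2 hAB <| by
    rw [map_ofReal_add_I_smul_mulVec, hA, hB, mulVec_zero]
    rfl
  ext i
  simpa using congrFun hx i

end Matrix

theorem quadratic_lower_bound_of_invertible_general
    (n : ℕ) (B₁ B₂ : Matrix (Fin n) (Fin n) ℝ)
    (hpsd : B₁.PosSemidef)
    (hinv : IsUnit (B₁.map (Complex.ofReal) + Complex.I • B₂.map (Complex.ofReal))) :
    ∃ c > 0, ∀ y : Fin n → ℝ,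
      c * (∑ i, y i ^ 2) ≤ (1/2) * ((B₁ *ᵥ y) ⬝ᵥ y) + ∑ i, (B₂ *ᵥ y) i ^ 2 := by
  have hM : ((1/2 : ℝ) • B₁ + B₂ᴴ * B₂).PosDef :=
    (hpsd.smul (by norm_num)).posDef_add_of_forall_mulVec_eq_zero
      (posSemidef_conjTranspose_mul_self B₂) fun x h₁ h₂ =>
        eq_zero_of_isUnit_map_ofReal_add_I_smul hinv (by simpa [smul_mulVec] using h₁)
          ((conjTranspose_mul_self_mulVec_eq_zero _ _).1 h₂)
  obtain ⟨c, hc, hle⟩ := hM.exists_pos_mul_dotProduct_le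
  refine ⟨c, hc, fun y => ?_⟩
  calc c * ∑ i, y i ^ 2 = c * (star y ⬝ᵥ y) := by simp [dotProduct, sq]
    _ ≤ star y ⬝ᵥ ((1/2 : ℝ) • B₁ + B₂ᴴ * B₂) *ᵥ y := hle y
    _ = (1/2) * ((B₁ *ᵥ y) ⬝ᵥ y) + ∑ i, (B₂ *ᵥ y) i ^ 2 := by
      rw [add_mulVec, dotProduct_add, smul_mulVec, dotProduct_smul, ← mulVec_mulVec,
        dotProduct_mulVec (star y) B₂ᴴ, ← star_mulVec, dotProduct_comm]
      simp [dotProduct, sq]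

/-- if `B₁, B₂` are real symmetric matrices, `B₁` positive semidefinite,
and `B₁ + iB₂` invertible, then `(1/2) B₁y·y + |B₂y|² ≥ c|y|²` for some `c > 0`. -/
theorem quadratic_lower_bound_of_invertible
    (n : ℕ) (B₁ B₂ : Matrix (Fin n) (Fin n) ℝ)
    (h₁ : B₁.IsSymm) (h₂ : B₂.IsSymm) (hpsd : B₁.PosSemidef)
    (hinv : IsUnit (B₁.map (Complex.ofReal) + Complex.I • B₂.map (Complex.ofReal))) :
    ∃ c > 0, ∀ y : Fin n → ℝ,
      c * (∑ i, y i ^ 2) ≤ (1/2) * ((B₁ *ᵥ y) ⬝ᵥ y) + ∑ i, (B₂ *ᵥ y) i ^ 2 :=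
  quadratic_lower_bound_of_invertible_general n B₁ B₂ hpsd hinv
end

section
/- Let V₁, V₂ be real-valued functions that are twice continuously differentiable on a neighborhood of x₀ ∈ ℝ^n, with V₁ ≥ 0 near x₀, V₁(x₀) = 0, V₂(x₀) = 0, ∇V₂(x₀) = 0, and such that the complex symmetric matrix V''(x₀) = V₁''(x₀) + iV₂''(x₀) is invertible. Then there exist constants c > 0, C > 0 and r > 0 such that c·|y|² ≤ V₁(x₀ + y) + |∇V₂(x₀ + y)|² ≤ C·|y|² for all |y| ≤ r. -/
/-!
Write `φ₁, φ₂` for the second derivatives of `V₁, V₂` at `x₀`. Taylor expansion gives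
`V₁ (x₀ + y) = φ₁ y y / 2 + o(‖y‖²)` and `∇V₂ (x₀ + y) = φ₂ y + o(‖y‖)`, so the quantity to be
estimated is `q y + o(‖y‖²)` with `q y = φ₁ y y / 2 + ‖φ₂ y‖²`. As `x₀` is a local minimum of `V₁`,
`φ₁` is positive semidefinite, so `q y = 0` forces `φ₁ y = 0` (Cauchy–Schwarz) and `φ₂ y = 0`;
then the real vector `y` is annihilated by `V''(x₀) = φ₁ + iφ₂`, hence `y = 0`. Being continuous,
positive away from `0` and homogeneous of degree two, `q` is comparable to `‖y‖²`, and the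
`o(‖y‖²)` error is absorbed for small `y`.
-/

noncomputable section

/-- The Hessian matrix of `f : ℝ^n → ℝ` at `x`, with entries
`∂²f/∂x_i∂x_j (x) = D²f(x)[e_i, e_j]`. -/
def hessMatrix (n : ℕ) (f : EuclideanSpace ℝ (Fin n) → ℝ)
    (x : EuclideanSpace ℝ (Fin n)) : Matrix (Fin n) (Fin n) ℝ :=
  Matrix.of fun i j =>
    iteratedFDeriv ℝ 2 f x ![EuclideanSpace.single i 1, EuclideanSpace.single j 1]

open Filter Topology Metric Asymptotics

section Calculus

variable {E F : Type*} [NormedAddCommGroup E] [NormedSpace ℝ E]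
  [NormedAddCommGroup F] [NormedSpace ℝ F]

theorem isLittleO_norm_sq_of_fderiv_isLittleO {g : E → F} (h0 : g 0 = 0)
    (hd : ∀ᶠ y in 𝓝 0, DifferentiableAt ℝ g y) (hg' : fderiv ℝ g =o[𝓝 0] id) :
    g =o[𝓝 0] fun y => ‖y‖ ^ 2 := by
  refine isLittleO_iff.2 fun ε hε => ?_
  obtain ⟨δ, hδ, hball⟩ := Metric.eventually_nhds_iff_ball.1 (hd.and (isLittleO_iff.1 hg' hε))
  filter_upwards [ball_mem_nhds 0 hδ] with y hy
  have hsub : closedBall (0 : E) ‖y‖ ⊆ ball 0 δ := closedBall_subset_ball (by simpa using hy)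
  have hmvt := (convex_closedBall (0 : E) ‖y‖).norm_image_sub_le_of_norm_fderiv_le
    (s := closedBall 0 ‖y‖) (C := ε * ‖y‖)
    (fun z hz => (hball z (hsub hz)).1) (fun z hz => ?_) (mem_closedBall_self (norm_nonneg y))
    (by simp : y ∈ closedBall 0 ‖y‖)
  · simpa [h0, sq, mul_assoc] using hmvt
  · exact (hball z (hsub hz)).2.trans (mul_le_mul_of_nonneg_left (by simpa using hz) hε.le)

theorem ContDiffAt.isLittleO_fderiv_sub_fderiv_fderiv {f : E → F} {x₀ : E}
    (hf : ContDiffAt ℝ 2 f x₀) (hf' : fderiv ℝ f x₀ = 0) :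
    (fun y => fderiv ℝ f (x₀ + y) - fderiv ℝ (fderiv ℝ f) x₀ y) =o[𝓝 0] id := by
  have := hasFDerivAt_iff_isLittleO_nhds_zero.1
    ((hf.fderiv_right (m := 1) le_rfl).differentiableAt one_ne_zero).hasFDerivAt
  rw [hf'] at this
  simp only [sub_zero] at this
  exact this

theorem ContDiffAt.isLittleO_taylor_two {f : E → ℝ} {x₀ : E} (hf : ContDiffAt ℝ 2 f x₀)
    (hf' : fderiv ℝ f x₀ = 0) :
    (fun y => f (x₀ + y) - f x₀ - fderiv ℝ (fderiv ℝ f) x₀ y y / 2) =o[𝓝 0]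
      fun y => ‖y‖ ^ 2 := by
  set φ := fderiv ℝ (fderiv ℝ f) x₀
  have hsymm : ∀ u v, φ u v = φ v u := (hf.isSymmSndFDerivAt (by simp)).eq
  have hderiv : ∀ᶠ y in 𝓝 0, HasFDerivAt (fun y => f (x₀ + y) - f x₀ - φ y y / 2)
      (fderiv ℝ f (x₀ + y) - φ y) y := by
    have hdiff : ∀ᶠ y in 𝓝 (0 : E), DifferentiableAt ℝ f (x₀ + y) :=
      ((continuous_const_add x₀).tendsto' 0 x₀ (add_zero x₀)).eventually
        ((hf.eventually (by simp)).mono fun z hz => hz.differentiableAt two_ne_zero)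
    filter_upwards [hdiff] with y hy
    have hq : HasFDerivAt (fun z => φ z z / 2) (φ y) y := by
      have := (φ.hasFDerivAt_of_bilinear (hasFDerivAt_id y) (hasFDerivAt_id y)).mul_const 2⁻¹
      simp_rw [div_eq_mul_inv]
      refine this.congr_fderiv ?_
      ext v
      simp [hsymm v y]
      ring
    exact (((hasFDerivAt_comp_add_left x₀).2 hy.hasFDerivAt).sub_const (f x₀)).sub hq
  refine isLittleO_norm_sq_of_fderiv_isLittleO (by simp)
    (hderiv.mono fun y hy => hy.differentiableAt) ?_
  exact (hf.isLittleO_fderiv_sub_fderiv_fderiv hf').congr'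
    (hderiv.mono fun y hy => hy.fderiv.symm) EventuallyEq.rfl

theorem IsLocalMin.fderiv_fderiv_apply_self_nonneg {f : E → ℝ} {x₀ : E} (hmin : IsLocalMin f x₀)
    (hf : ContDiffAt ℝ 2 f x₀) (v : E) : 0 ≤ fderiv ℝ (fderiv ℝ f) x₀ v v := by
  by_contra! hneg
  set a := fderiv ℝ (fderiv ℝ f) x₀ v v
  have hline : Tendsto (fun t : ℝ => t • v) (𝓝 0) (𝓝 0) :=
    (continuous_id.smul continuous_const).tendsto' 0 0 (zero_smul ℝ v)
  have hR : (fun t : ℝ => f (x₀ + t • v) - f x₀ - t ^ 2 * a / 2) =o[𝓝 0] fun t => t ^ 2 := by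
    refine ((hf.isLittleO_taylor_two hmin.fderiv_eq_zero).comp_tendsto hline).trans_isBigO
      (IsBigO.of_bound (‖v‖ ^ 2) (Eventually.of_forall fun t => ?_)) |>.congr_left fun t => ?_
    · simp [norm_smul, mul_pow, mul_comm]
    · simp [a, map_smul, smul_eq_mul]
      ring
  have hmin' : ∀ᶠ t : ℝ in 𝓝 0, f x₀ ≤ f (x₀ + t • v) := by
    have := hline.const_add x₀
    rw [add_zero] at this
    exact this.eventually hmin
  have hsmall := (isLittleO_iff.1 hR (by linarith : 0 < -a / 4)).and hmin'
  obtain ⟨t, ⟨hRt, hmint⟩, ht⟩ :=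
    ((hsmall.filter_mono nhdsWithin_le_nhds).and self_mem_nhdsWithin).exists (f := 𝓝[≠] (0 : ℝ))
  have ht2 : 0 < t ^ 2 := by have : t ≠ 0 := ht; positivity
  rw [Real.norm_eq_abs, norm_pow, Real.norm_eq_abs, sq_abs] at hRt
  nlinarith [(abs_le.1 hRt).2]

theorem exists_pos_mul_norm_sq_le [ProperSpace E] {Q : E → ℝ} (hQ : Continuous Q)
    (hsmul : ∀ (t : ℝ) y, Q (t • y) = t ^ 2 * Q y) (hpos : ∀ y ≠ 0, 0 < Q y) :
    ∃ c > 0, ∀ y, c * ‖y‖ ^ 2 ≤ Q y := by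
  have hQ0 : Q 0 = 0 := by simpa using hsmul 0 0
  rcases subsingleton_or_nontrivial E with hE | hE
  · exact ⟨1, one_pos, fun y => by simp [Subsingleton.elim y 0, hQ0]⟩
  obtain ⟨u₀, hu₀, hmin⟩ := (isCompact_sphere (0 : E) 1).exists_isMinOn
    (NormedSpace.sphere_nonempty.2 zero_le_one) hQ.continuousOn
  refine ⟨Q u₀, hpos u₀ (ne_zero_of_mem_unit_sphere ⟨u₀, hu₀⟩), fun y => ?_⟩
  rcases eq_or_ne y 0 with rfl | hy
  · simp [hQ0]
  have hu : ‖y‖⁻¹ • y ∈ sphere (0 : E) 1 := by simp [norm_smul, hy]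
  calc Q u₀ * ‖y‖ ^ 2 ≤ Q (‖y‖⁻¹ • y) * ‖y‖ ^ 2 := by gcongr; exact hmin hu
    _ = Q y := by rw [hsmul, inv_pow]; field_simp

end Calculus

section Comparison

variable {E : Type*} [SeminormedAddCommGroup E]

theorem isLittleO_norm_sq_sub_norm_sq {α F : Type*} [SeminormedAddCommGroup F] {l : Filter α}
    {a b : α → F} {g : α → ℝ}
    (hab : (fun x => a x - b x) =o[l] g) (hb : b =O[l] g) :
    (fun x => ‖a x‖ ^ 2 - ‖b x‖ ^ 2) =o[l] fun x => g x ^ 2 := by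
  have hdiff : (fun x => ‖a x‖ - ‖b x‖) =o[l] g :=
    (IsBigO.of_bound 1 (Eventually.of_forall fun x => by
      simpa [one_mul] using abs_norm_sub_norm_le (a x) (b x))).trans_isLittleO hab
  have hsum : (fun x => ‖a x‖ + ‖b x‖) =O[l] g := by
    refine IsBigO.add ?_ hb.norm_left
    simpa using (hab.isBigO.add hb).norm_left
  exact (hdiff.mul_isBigO hsum).congr (fun x => by ring) (fun x => by ring)

theorem exists_sq_bounds_of_isLittleO {F Q : E → ℝ} {c₀ C₀ : ℝ} (hc₀ : 0 < c₀)
    (hlow : ∀ y, c₀ * ‖y‖ ^ 2 ≤ Q y) (hup : ∀ y, Q y ≤ C₀ * ‖y‖ ^ 2)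
    (hFQ : (fun y => F y - Q y) =o[𝓝 0] fun y => ‖y‖ ^ 2) :
    ∃ c > 0, ∃ C > 0, ∃ r > 0, ∀ y, ‖y‖ ≤ r → c * ‖y‖ ^ 2 ≤ F y ∧ F y ≤ C * ‖y‖ ^ 2 := by
  obtain ⟨δ, hδ, hclose⟩ := Metric.eventually_nhds_iff.1 (isLittleO_iff.1 hFQ (half_pos hc₀))
  refine ⟨c₀ / 2, half_pos hc₀, |C₀| + c₀, by positivity, δ / 2, half_pos hδ, fun y hy => ?_⟩
  have hFy := abs_le.1 (by simpa using hclose (by simpa using hy.trans_lt (half_lt_self hδ)))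
  have hy2 := sq_nonneg ‖y‖
  constructor <;> nlinarith [hlow y, hup y, le_abs_self C₀]

end Comparison

section QuadraticModel

variable {E : Type*} [NormedAddCommGroup E] [NormedSpace ℝ E] (φ₁ φ₂ : E →L[ℝ] E →L[ℝ] ℝ)

theorem apply_self_div_two_add_norm_sq_le (y : E) :
    φ₁ y y / 2 + ‖φ₂ y‖ ^ 2 ≤ (‖φ₁‖ / 2 + ‖φ₂‖ ^ 2) * ‖y‖ ^ 2 := by
  have h₁ : φ₁ y y ≤ ‖φ₁‖ * ‖y‖ * ‖y‖ := (le_abs_self _).trans (φ₁.le_opNorm₂ y y)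
  have h₂ : ‖φ₂ y‖ ^ 2 ≤ (‖φ₂‖ * ‖y‖) ^ 2 := by gcongr; exact φ₂.le_opNorm y
  nlinarith

variable {φ₁ φ₂}

theorem apply_self_div_two_add_norm_sq_pos (hpsd : ∀ v, 0 ≤ φ₁ v v)
    (hsymm : ∀ u v, φ₁ u v = φ₁ v u) (hker : ∀ y, φ₁ y = 0 → φ₂ y = 0 → y = 0) {y : E}
    (hy : y ≠ 0) : 0 < φ₁ y y / 2 + ‖φ₂ y‖ ^ 2 := by
  have hnonneg : 0 ≤ φ₁ y y / 2 + ‖φ₂ y‖ ^ 2 := by have := hpsd y; positivity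
  refine hnonneg.lt_of_ne fun h => hy (hker y ?_ ?_)
  · have hy₁ : φ₁ y y = 0 := by nlinarith [hpsd y, sq_nonneg ‖φ₂ y‖]
    have := LinearMap.mem_ker.1 <| (LinearMap.BilinForm.apply_apply_same_eq_zero_iff
      (B := φ₁.toLinearMap₁₂) hpsd ⟨hsymm⟩).1 hy₁
    ext z
    exact LinearMap.congr_fun this z
  · refine norm_eq_zero.1 <| pow_eq_zero_iff two_ne_zero |>.1 ?_
    nlinarith [hpsd y, sq_nonneg ‖φ₂ y‖]

end QuadraticModel

section Euclidean

variable {n : ℕ}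

theorem hessMatrix_apply (f : EuclideanSpace ℝ (Fin n) → ℝ) (x : EuclideanSpace ℝ (Fin n))
    (i j : Fin n) : hessMatrix n f x i j =
      fderiv ℝ (fderiv ℝ f) x (EuclideanSpace.single i 1) (EuclideanSpace.single j 1) := by
  simp [hessMatrix, iteratedFDeriv_two_apply]

theorem eq_zero_of_fderiv_fderiv_eq_zero {f g : EuclideanSpace ℝ (Fin n) → ℝ}
    {x : EuclideanSpace ℝ (Fin n)} (hinv : IsUnit ((hessMatrix n f x).map Complex.ofReal
        + Complex.I • (hessMatrix n g x).map Complex.ofReal))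
    {y : EuclideanSpace ℝ (Fin n)} (hf : fderiv ℝ (fderiv ℝ f) x y = 0)
    (hg : fderiv ℝ (fderiv ℝ g) x y = 0) : y = 0 := by
  have hexpand : ∀ (φ : EuclideanSpace ℝ (Fin n) →L[ℝ] EuclideanSpace ℝ (Fin n) →L[ℝ] ℝ) v,
      φ y v = ∑ i, y i * φ (EuclideanSpace.single i 1) v := by
    intro φ v
    conv_lhs => rw [← (EuclideanSpace.basisFun (Fin n) ℝ).sum_repr y]
    simp
  set M := (hessMatrix n f x).map Complex.ofReal
    + Complex.I • (hessMatrix n g x).map Complex.ofReal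
  have hz : Matrix.vecMul (fun i => (y i : ℂ)) M = Matrix.vecMul 0 M := by
    ext j
    have h := congrArg₂ (fun a b : ℝ => (a : ℂ) + Complex.I * b)
      (congrArg (· (EuclideanSpace.single j 1)) hf) (congrArg (· (EuclideanSpace.single j 1)) hg)
    push_cast [hexpand, zero_apply] at h
    simpa [M, Matrix.vecMul, dotProduct, hessMatrix_apply, mul_add, Finset.sum_add_distrib,
      mul_left_comm _ Complex.I, ← Finset.mul_sum] using h
  ext i
  simpa using congrFun (Matrix.vecMul_injective_iff_isUnit.2 hinv hz) i

end Euclidean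

theorem local_quadratic_comparability_general
    (n : ℕ) (x₀ : EuclideanSpace ℝ (Fin n))
    (V₁ V₂ : EuclideanSpace ℝ (Fin n) → ℝ)
    (hV₁ : ContDiffAt ℝ 2 V₁ x₀) (hV₂ : ContDiffAt ℝ 2 V₂ x₀)
    (hV₁pos : ∀ᶠ x in nhds x₀, 0 ≤ V₁ x)
    (h0 : V₁ x₀ = 0) (hg : gradient V₂ x₀ = 0)
    (hinv : IsUnit ((hessMatrix n V₁ x₀).map Complex.ofReal
        + Complex.I • (hessMatrix n V₂ x₀).map Complex.ofReal)) :
    ∃ c > 0, ∃ C > 0, ∃ r > 0, ∀ y : EuclideanSpace ℝ (Fin n), ‖y‖ ≤ r →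
      c * ‖y‖ ^ 2 ≤ V₁ (x₀ + y) + ‖gradient V₂ (x₀ + y)‖ ^ 2 ∧
      V₁ (x₀ + y) + ‖gradient V₂ (x₀ + y)‖ ^ 2 ≤ C * ‖y‖ ^ 2 := by
  set φ₁ := fderiv ℝ (fderiv ℝ V₁) x₀
  set φ₂ := fderiv ℝ (fderiv ℝ V₂) x₀
  have hmin : IsLocalMin V₁ x₀ := hV₁pos.mono fun x hx => h0 ▸ hx
  have hd₂ : fderiv ℝ V₂ x₀ = 0 := by simpa [gradient] using hg
  obtain ⟨c₀, hc₀, hlow⟩ := exists_pos_mul_norm_sq_le (Q := fun y => φ₁ y y / 2 + ‖φ₂ y‖ ^ 2)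
    (by fun_prop) (fun t y => by simp [norm_smul, mul_pow]; ring)
    fun y => apply_self_div_two_add_norm_sq_pos (hmin.fderiv_fderiv_apply_self_nonneg hV₁)
      (hV₁.isSymmSndFDerivAt (by simp)).eq
      (fun y h₁ h₂ => eq_zero_of_fderiv_fderiv_eq_zero hinv h₁ h₂)
  have hV₁o := hV₁.isLittleO_taylor_two hmin.fderiv_eq_zero
  have hV₂o := isLittleO_norm_sq_sub_norm_sq
    (isLittleO_norm_right.2 (hV₂.isLittleO_fderiv_sub_fderiv_fderiv hd₂))
    (φ₂.isBigO_id (𝓝 0)).norm_right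
  simpa [gradient] using exists_sq_bounds_of_isLittleO hc₀ hlow
    (apply_self_div_two_add_norm_sq_le φ₁ φ₂)
    ((hV₁o.add hV₂o).congr_left fun y => by simp only [h0]; ring)

/-- if `V₁, V₂` are `C²` near `x₀`, `V₁ ≥ 0` near `x₀`, `V₁(x₀) = 0`,
`V₂(x₀) = 0`, `∇V₂(x₀) = 0`, and `V''(x₀) = V₁''(x₀) + iV₂''(x₀)` is invertible, then
`V₁(x₀+y) + |∇V₂(x₀+y)|² ∼ |y|²` for `y` small. -/
theorem local_quadratic_comparability
    (n : ℕ) (x₀ : EuclideanSpace ℝ (Fin n))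
    (V₁ V₂ : EuclideanSpace ℝ (Fin n) → ℝ)
    (hV₁ : ContDiffAt ℝ 2 V₁ x₀) (hV₂ : ContDiffAt ℝ 2 V₂ x₀)
    (hV₁pos : ∀ᶠ x in nhds x₀, 0 ≤ V₁ x)
    (h0 : V₁ x₀ = 0) (h0' : V₂ x₀ = 0) (hg : gradient V₂ x₀ = 0)
    (hinv : IsUnit ((hessMatrix n V₁ x₀).map Complex.ofReal
        + Complex.I • (hessMatrix n V₂ x₀).map Complex.ofReal)) :
    ∃ c > 0, ∃ C > 0, ∃ r > 0, ∀ y : EuclideanSpace ℝ (Fin n), ‖y‖ ≤ r →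
      c * ‖y‖ ^ 2 ≤ V₁ (x₀ + y) + ‖gradient V₂ (x₀ + y)‖ ^ 2 ∧
      V₁ (x₀ + y) + ‖gradient V₂ (x₀ + y)‖ ^ 2 ≤ C * ‖y‖ ^ 2 :=
  local_quadratic_comparability_general n x₀ V₁ V₂ hV₁ hV₂ hV₁pos h0 hg hinv
end
end

section
/- Let V be a complex symmetric n × n matrix (Vᵀ = V) whose real part Re V is positive semidefinite as a real symmetric matrix. If z ∈ ℂ^n satisfies Vz = 0, then V(Re z) = 0 and V(Im z) = 0; that is, the kernel of V in ℂ^n is the complexification of its intersection with ℝ^n. In particular, Ker V ∩ ℝ^n = {0} implies that V is invertible. -/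
/-!
Write `V = A + iB` and `z = x + iy` with `A`, `B`, `x`, `y` real. Then `Vz = 0` says
`Ax = By` and `Ay = -Bx`, and the symmetry of `B` gives
`x ⬝ Ax + y ⬝ Ay = x ⬝ By - y ⬝ Bx = 0`. Both terms are nonnegative since `A` is positive
semidefinite, so both vanish, whence `Ax = Ay = 0` and then `Bx = By = 0`: the real vectors
`x` and `y` lie in the kernel of `V`. If that kernel has no nonzero real vector, `V` is injective.
-/

open Matrix

namespace Matrix

variable {m n : Type*} [Fintype n]

lemma re_mulVec (V : Matrix m n ℂ) (z : n → ℂ) :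
    (fun i => ((V *ᵥ z) i).re) =
      V.map Complex.re *ᵥ (fun j => (z j).re) - V.map Complex.im *ᵥ (fun j => (z j).im) := by
  ext i
  simp [mulVec, dotProduct, Complex.re_sum, Complex.mul_re, Finset.sum_sub_distrib]

lemma im_mulVec (V : Matrix m n ℂ) (z : n → ℂ) :
    (fun i => ((V *ᵥ z) i).im) =
      V.map Complex.re *ᵥ (fun j => (z j).im) + V.map Complex.im *ᵥ (fun j => (z j).re) := by
  ext i
  simp [mulVec, dotProduct, Complex.im_sum, Complex.mul_im, Finset.sum_add_distrib, add_comm]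

lemma _root_.Complex.pi_eq_zero_iff {ι : Type*} (v : ι → ℂ) :
    v = 0 ↔ (fun i => (v i).re) = 0 ∧ (fun i => (v i).im) = 0 := by
  simp only [funext_iff, Pi.zero_apply, Complex.ext_iff, Complex.zero_re, Complex.zero_im,
    forall_and]

lemma mulVec_ofReal_eq_zero_iff (V : Matrix m n ℂ) (x : n → ℝ) :
    V *ᵥ (fun j => (x j : ℂ)) = 0 ↔ V.map Complex.re *ᵥ x = 0 ∧ V.map Complex.im *ᵥ x = 0 := by
  rw [Complex.pi_eq_zero_iff, re_mulVec, im_mulVec]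
  simp only [Complex.ofReal_re, Complex.ofReal_im, ← Pi.zero_def, mulVec_zero, sub_zero, zero_add]

lemma PosSemidef.mulVec_eq_zero_of_dotProduct_add_eq_zero {A : Matrix n n ℝ} (hA : A.PosSemidef)
    {x y : n → ℝ} (h : x ⬝ᵥ A *ᵥ x + y ⬝ᵥ A *ᵥ y = 0) : A *ᵥ x = 0 ∧ A *ᵥ y = 0 := by
  have hx := hA.dotProduct_mulVec_nonneg x
  have hy := hA.dotProduct_mulVec_nonneg y
  rw [star_trivial] at hx hy
  exact ⟨(hA.dotProduct_mulVec_zero_iff x).mp (by rw [star_trivial]; linarith),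
    (hA.dotProduct_mulVec_zero_iff y).mp (by rw [star_trivial]; linarith)⟩

lemma IsSymm.dotProduct_mulVec_comm {R : Type*} [CommSemiring R] {B : Matrix n n R}
    (hB : B.IsSymm) (x y : n → R) : x ⬝ᵥ B *ᵥ y = y ⬝ᵥ B *ᵥ x := by
  rw [dotProduct_mulVec, ← mulVec_transpose, hB.eq, dotProduct_comm]

theorem IsSymm.mulVec_re_eq_zero_and_mulVec_im_eq_zero {V : Matrix n n ℂ} (hsym : V.IsSymm)
    (hpsd : (V.map Complex.re).PosSemidef) {z : n → ℂ} (hz : V *ᵥ z = 0) :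
    V *ᵥ (fun i => ((z i).re : ℂ)) = 0 ∧ V *ᵥ (fun i => ((z i).im : ℂ)) = 0 := by
  set x : n → ℝ := fun i => (z i).re
  set y : n → ℝ := fun i => (z i).im
  set A := V.map Complex.re
  set B := V.map Complex.im
  rw [Complex.pi_eq_zero_iff, re_mulVec, im_mulVec] at hz
  have hAx : A *ᵥ x = B *ᵥ y := sub_eq_zero.mp hz.1
  have hAy : A *ᵥ y = -(B *ᵥ x) := eq_neg_of_add_eq_zero_left hz.2
  have hquad : x ⬝ᵥ A *ᵥ x + y ⬝ᵥ A *ᵥ y = 0 := by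
    rw [hAx, hAy, dotProduct_neg, (hsym.map Complex.im).dotProduct_mulVec_comm, add_neg_cancel]
  obtain ⟨hAx0, hAy0⟩ := hpsd.mulVec_eq_zero_of_dotProduct_add_eq_zero hquad
  rw [mulVec_ofReal_eq_zero_iff, mulVec_ofReal_eq_zero_iff]
  refine ⟨⟨hAx0, ?_⟩, ⟨hAy0, ?_⟩⟩
  · rwa [hAy0, zero_eq_neg] at hAy
  · rwa [hAx0, eq_comm] at hAx

theorem IsSymm.isUnit_of_real_ker_trivial [DecidableEq n] {V : Matrix n n ℂ} (hsym : V.IsSymm)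
    (hpsd : (V.map Complex.re).PosSemidef)
    (hker : ∀ x : n → ℝ, V *ᵥ (fun i => (x i : ℂ)) = 0 → x = 0) : IsUnit V := by
  rw [← mulVec_injective_iff_isUnit, ← coe_mulVecLin, injective_iff_map_eq_zero]
  intro z hz
  obtain ⟨hre, him⟩ := hsym.mulVec_re_eq_zero_and_mulVec_im_eq_zero hpsd hz
  exact (Complex.pi_eq_zero_iff z).mpr ⟨hker _ hre, hker _ him⟩

end Matrix

/-- if `V` is complex symmetric with positive semidefinite real part,
then `Vz = 0` implies `V(Re z) = 0` and `V(Im z) = 0` (the kernel of `V` is the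
complexification of its real points); in particular `Ker V ∩ ℝ^n = {0}` implies `V`
invertible. -/
theorem kernel_is_complexification_of_real_kernel
    (n : ℕ) (V : Matrix (Fin n) (Fin n) ℂ) (hsym : V.IsSymm)
    (hpsd : (V.map Complex.re).PosSemidef) :
    (∀ z : Fin n → ℂ, V *ᵥ z = 0 →
      V *ᵥ (fun i => ((z i).re : ℂ)) = 0 ∧ V *ᵥ (fun i => ((z i).im : ℂ)) = 0) ∧
    ((∀ x : Fin n → ℝ, V *ᵥ (fun i => (x i : ℂ)) = 0 → x = 0) → IsUnit V) :=
  ⟨fun _ hz => hsym.mulVec_re_eq_zero_and_mulVec_im_eq_zero hpsd hz,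
    hsym.isUnit_of_real_ker_trivial hpsd⟩
end

section
/- Let A be a real antisymmetric n × n matrix (Aᵀ = −A) and V a complex symmetric n × n matrix. Define the 2n × 2n complex matrix F by the block form F = [[−A, I], [A² − V/2, −A]], and for λ ∈ ℂ set T(λ) = λ²I + 2λA + (1/2)V. Then det(λ·I_{2n} − F) = det(T(λ)) for every λ ∈ ℂ; in particular, λ₀ ∈ ℂ is an eigenvalue of F if and only if T(λ₀) has nontrivial kernel. -/
/-!
Right-multiplying `λ - F = [[λ + A, -1], [V/2 - A², λ + A]]` by the unipotent `[[1, 0], [λ + A, 1]]`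
gives `J * [[T(λ), λ + A], [0, 1]]` with `J = [[0, -1], [1, 0]]`, and `det J = 1`.
-/

open Matrix

namespace Matrix

variable {l R : Type*} [DecidableEq l] [Fintype l] [CommRing R]

theorem det_J : (J l R).det = 1 := by
  have : J l R = fromBlocks 1 (-1) 0 1 * fromBlocks 1 0 1 1 * fromBlocks 1 (-1) 0 1 := by
    simp [J, fromBlocks_multiply]
  rw [this, det_mul, det_mul, det_fromBlocks_zero₂₁, det_fromBlocks_zero₁₂]
  simp

theorem det_fromBlocks_neg_one₁₂ (A C D : Matrix l l R) :
    (fromBlocks A (-1) C D).det = (C + D * A).det := by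
  have h : fromBlocks A (-1) C D * fromBlocks 1 0 A 1 = J l R * fromBlocks (C + D * A) D 0 1 := by
    simp [J, fromBlocks_multiply]
  simpa [det_J] using congrArg det h

theorem det_smul_one_sub_fromBlocks (B W : Matrix l l R) (lam : R) :
    (lam • 1 - fromBlocks (-B) 1 (B * B - W) (-B)).det = (lam ^ 2 • 1 + (2 * lam) • B + W).det := by
  have hblocks : lam • 1 - fromBlocks (-B) 1 (B * B - W) (-B) =
      fromBlocks (lam • 1 + B) (-1) (W - B * B) (lam • 1 + B) := by
    rw [← fromBlocks_one, fromBlocks_smul, sub_eq_add_neg, fromBlocks_neg, fromBlocks_add]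
    simp only [smul_zero, neg_neg, zero_add, neg_sub]
  rw [hblocks, det_fromBlocks_neg_one₁₂]
  congr 1
  simp only [add_mul, mul_add, Matrix.smul_mul, Matrix.mul_smul, smul_smul, Matrix.one_mul,
    Matrix.mul_one]
  module

end Matrix

theorem det_hamilton_matrix_eq_det_pencil_general
    (n : ℕ)
    (V : Matrix (Fin n) (Fin n) ℂ)
    (Ac : Matrix (Fin n) (Fin n) ℂ)
    (F : Matrix (Fin n ⊕ Fin n) (Fin n ⊕ Fin n) ℂ)
    (hF : F = Matrix.fromBlocks (-Ac) 1 (Ac * Ac - (1/2 : ℂ) • V) (-Ac))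
    (T : ℂ → Matrix (Fin n) (Fin n) ℂ)
    (hT : ∀ lam : ℂ, T lam = lam ^ 2 • 1 + (2 * lam) • Ac + (1/2 : ℂ) • V) :
    (∀ lam : ℂ,
      (lam • (1 : Matrix (Fin n ⊕ Fin n) (Fin n ⊕ Fin n) ℂ) - F).det = (T lam).det) ∧
    (∀ lam₀ : ℂ,
      (lam₀ • (1 : Matrix (Fin n ⊕ Fin n) (Fin n ⊕ Fin n) ℂ) - F).det = 0
        ↔ ∃ v : Fin n → ℂ, v ≠ 0 ∧ T lam₀ *ᵥ v = 0) := by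
  have hdet : ∀ lam : ℂ,
      (lam • (1 : Matrix (Fin n ⊕ Fin n) (Fin n ⊕ Fin n) ℂ) - F).det = (T lam).det := by
    intro lam
    rw [hF, hT, det_smul_one_sub_fromBlocks]
  exact ⟨hdet, fun lam₀ => by rw [hdet, exists_mulVec_eq_zero_iff]⟩

/-- for `A` real antisymmetric and `V` complex symmetric, the Hamilton
matrix `F = [[−A, I], [A² − V/2, −A]]` satisfies `det(λ − F) = det(T(λ))` with
`T(λ) = λ² + 2λA + V/2`; in particular `λ₀` is an eigenvalue of `F` iff
`Ker T(λ₀) ≠ {0}`. -/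
theorem det_hamilton_matrix_eq_det_pencil
    (n : ℕ) (A : Matrix (Fin n) (Fin n) ℝ) (hA : Aᵀ = -A)
    (V : Matrix (Fin n) (Fin n) ℂ) (hV : Vᵀ = V)
    (Ac : Matrix (Fin n) (Fin n) ℂ) (hAc : Ac = A.map Complex.ofReal)
    (F : Matrix (Fin n ⊕ Fin n) (Fin n ⊕ Fin n) ℂ)
    (hF : F = Matrix.fromBlocks (-Ac) 1 (Ac * Ac - (1/2 : ℂ) • V) (-Ac))
    (T : ℂ → Matrix (Fin n) (Fin n) ℂ)
    (hT : ∀ lam : ℂ, T lam = lam ^ 2 • 1 + (2 * lam) • Ac + (1/2 : ℂ) • V) :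
    (∀ lam : ℂ,
      (lam • (1 : Matrix (Fin n ⊕ Fin n) (Fin n ⊕ Fin n) ℂ) - F).det = (T lam).det) ∧
    (∀ lam₀ : ℂ,
      (lam₀ • (1 : Matrix (Fin n ⊕ Fin n) (Fin n ⊕ Fin n) ℂ) - F).det = 0
        ↔ ∃ v : Fin n → ℂ, v ≠ 0 ∧ T lam₀ *ᵥ v = 0) :=
  det_hamilton_matrix_eq_det_pencil_general n V Ac F hF T hT
end

section
/- Let A be a real antisymmetric n × n matrix and V a complex symmetric n × n matrix; set F = [[−A, I], [A² − V/2, −A]] ∈ M_{2n}(ℂ) and T(λ) = λ²I + 2λA + (1/2)V. Let λ₀ be an eigenvalue of F and let ε > 0 be such that λ₀ is the only eigenvalue of F in the closed disc {λ : |λ − λ₀| ≤ ε}. Then tr( (2πi)^{−1} ∮_{|λ−λ₀|=ε} (λ·I_{2n} − F)^{−1} dλ ) = tr( (2πi)^{−1} ∮_{|λ−λ₀|=ε} T(λ)^{−1}·T'(λ) dλ ), i.e., the algebraic multiplicity of λ₀ as an eigenvalue of F equals its multiplicity as an eigenvalue of the quadratic matrix pencil T. -/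
open Matrix Real

attribute [local instance] Matrix.normedAddCommGroup Matrix.normedSpace

/-!
On the circle `λ - F` is invertible, and it is the block matrix `[[a, -1], [-c, a]]` with
`a = λ + A` and `c = A² - V/2`, so that `a² - c = T(λ)`. The inverse of such a block matrix has
diagonal blocks `T(λ)⁻¹ a` and `a T(λ)⁻¹`, so pointwise on the circle
`tr (λ - F)⁻¹ = tr (T(λ)⁻¹ · 2a) = tr (T(λ)⁻¹ T'(λ))`. The trace is a continuous linear map,
hence commutes with the contour integrals.
-/

theorem ContinuousLinearMap.circleIntegral_comp_comm {E F : Type*} [NormedAddCommGroup E]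
    [NormedSpace ℂ E] [CompleteSpace E] [NormedAddCommGroup F] [NormedSpace ℂ F] [CompleteSpace F]
    (L : E →L[ℂ] F) {f : ℂ → E} {c : ℂ} {R : ℝ} (hf : CircleIntegrable f c R) :
    ∮ z in C(c, R), L (f z) = L (∮ z in C(c, R), f z) := by
  simp only [circleIntegral, ← L.map_smul]
  exact L.intervalIntegral_comp_comm ((circleIntegrable_iff R).1 hf)

theorem Matrix.trace_circleIntegral {ι : Type*} [Fintype ι] {f : ℂ → Matrix ι ι ℂ} {c : ℂ}
    {R : ℝ} (hf : CircleIntegrable f c R) :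
    trace (∮ z in C(c, R), f z) = ∮ z in C(c, R), trace (f z) :=
  ((traceLinearMap ι ℂ ℂ).toContinuousLinearMap.circleIntegral_comp_comm hf).symm

theorem ContinuousOn.matrix_inv {X K ι : Type*} [TopologicalSpace X] [Field K]
    [TopologicalSpace K] [IsTopologicalDivisionRing K] [Fintype ι] [DecidableEq ι]
    {f : X → Matrix ι ι K} {s : Set X} (hf : ContinuousOn f s) (hdet : ∀ x ∈ s, (f x).det ≠ 0) :
    ContinuousOn (fun x => (f x)⁻¹) s := fun x hx =>
  have hinv : ContinuousAt Ring.inverse (f x).det := by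
    simpa only [Ring.inverse_eq_inv'] using continuousAt_inv₀ (hdet x hx)
  (continuousAt_matrix_inv _ hinv).comp_continuousWithinAt (hf x hx)

theorem Matrix.trace_fromBlocks {R m n : Type*} [AddCommMonoid R] [Fintype m] [Fintype n]
    (A : Matrix m m R) (B : Matrix m n R) (C : Matrix n m R) (D : Matrix n n R) :
    trace (fromBlocks A B C D) = trace A + trace D := by
  simp [trace, Fintype.sum_sum_type]

section FromBlocksNegOne

variable {R ι : Type*} [CommRing R] [Fintype ι] [DecidableEq ι] (a c : Matrix ι ι R)

theorem isUnit_det_mul_self_sub_of_isUnit_det_fromBlocks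
    (h : IsUnit (fromBlocks a (-1) (-c) a).det) : IsUnit (a * a - c).det := by
  set N := (fromBlocks a (-1) (-c) a)⁻¹
  have hN : fromBlocks a (-1) (-c) a * N = 1 := mul_nonsing_inv _ h
  rw [← fromBlocks_toBlocks N, fromBlocks_multiply, ← fromBlocks_one, fromBlocks_inj] at hN
  obtain ⟨-, h₁₂, -, h₂₂⟩ := hN
  rw [neg_one_mul, add_neg_eq_zero] at h₁₂
  refine isUnit_det_of_right_inverse (B := N.toBlocks₁₂) ?_
  rw [← h₂₂, sub_mul, mul_assoc, h₁₂, Matrix.neg_mul]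
  abel

theorem inv_fromBlocks_neg_one (h : IsUnit (a * a - c).det) :
    (fromBlocks a (-1) (-c) a)⁻¹ =
      fromBlocks ((a * a - c)⁻¹ * a) (a * a - c)⁻¹
        (a * (a * a - c)⁻¹ * a - 1) (a * (a * a - c)⁻¹) := by
  have hS := mul_nonsing_inv _ h
  refine inv_eq_right_inv ?_
  rw [fromBlocks_multiply, ← fromBlocks_one]
  congr 1
  · noncomm_ring
  · noncomm_ring
  · calc -c * ((a * a - c)⁻¹ * a) + a * (a * (a * a - c)⁻¹ * a - 1)
        = (a * a - c) * (a * a - c)⁻¹ * a - a := by noncomm_ring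
      _ = 0 := by rw [hS, Matrix.one_mul, sub_self]
  · rw [← hS]; noncomm_ring

theorem trace_inv_fromBlocks_neg_one (h : IsUnit (a * a - c).det) :
    trace (fromBlocks a (-1) (-c) a)⁻¹ = trace ((a * a - c)⁻¹ * (2 : R) • a) := by
  rw [inv_fromBlocks_neg_one a c h, trace_fromBlocks, trace_mul_comm a, Matrix.mul_smul,
    trace_smul, two_smul]

end FromBlocksNegOne

section HamiltonMap

variable {R ι : Type*} [CommRing R] [Fintype ι] [DecidableEq ι] (a W : Matrix ι ι R) (z : R)

theorem smul_one_sub_fromBlocks_eq_fromBlocks_neg_one :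
    z • (1 : Matrix (ι ⊕ ι) (ι ⊕ ι) R) - fromBlocks (-a) 1 (a * a - W) (-a) =
      fromBlocks (z • 1 + a) (-1) (-(a * a - W)) (z • 1 + a) := by
  rw [← fromBlocks_one, fromBlocks_smul, sub_eq_add_neg, fromBlocks_neg, fromBlocks_add]
  congr 1 <;> simp

theorem add_mul_add_sub_eq_pencil :
    (z • 1 + a) * (z • 1 + a) - (a * a - W) = z ^ 2 • 1 + (2 * z) • a + W := by
  simp only [add_mul, mul_add, smul_mul_assoc, mul_smul_comm, Matrix.one_mul, Matrix.mul_one]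
  module

theorem isUnit_det_pencil_of_isUnit_det_smul_one_sub
    (h : IsUnit (z • (1 : Matrix (ι ⊕ ι) (ι ⊕ ι) R) - fromBlocks (-a) 1 (a * a - W) (-a)).det) :
    IsUnit (z ^ 2 • 1 + (2 * z) • a + W).det := by
  rw [smul_one_sub_fromBlocks_eq_fromBlocks_neg_one] at h
  simpa only [add_mul_add_sub_eq_pencil] using
    isUnit_det_mul_self_sub_of_isUnit_det_fromBlocks _ _ h

theorem trace_inv_smul_one_sub_eq_trace_pencil
    (h : IsUnit (z • (1 : Matrix (ι ⊕ ι) (ι ⊕ ι) R) - fromBlocks (-a) 1 (a * a - W) (-a)).det) :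
    trace (z • (1 : Matrix (ι ⊕ ι) (ι ⊕ ι) R) - fromBlocks (-a) 1 (a * a - W) (-a))⁻¹ =
      trace ((z ^ 2 • 1 + (2 * z) • a + W)⁻¹ * ((2 * z) • 1 + (2 : R) • a)) := by
  have hT := isUnit_det_pencil_of_isUnit_det_smul_one_sub a W z h
  rw [← add_mul_add_sub_eq_pencil] at hT ⊢
  rw [smul_one_sub_fromBlocks_eq_fromBlocks_neg_one, trace_inv_fromBlocks_neg_one _ _ hT,
    smul_add, smul_smul]

end HamiltonMap

theorem trace_riesz_projection_eq_pencil_multiplicity_general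
    (n : ℕ)
    (V : Matrix (Fin n) (Fin n) ℂ)
    (Ac : Matrix (Fin n) (Fin n) ℂ)
    (F : Matrix (Fin n ⊕ Fin n) (Fin n ⊕ Fin n) ℂ)
    (hF : F = Matrix.fromBlocks (-Ac) 1 (Ac * Ac - (1/2 : ℂ) • V) (-Ac))
    (T : ℂ → Matrix (Fin n) (Fin n) ℂ)
    (hT : ∀ lam : ℂ, T lam = lam ^ 2 • 1 + (2 * lam) • Ac + (1/2 : ℂ) • V)
    (lam₀ : ℂ)
    (ε : ℝ) (hε : 0 < ε)
    (honly : ∀ lam : ℂ, ‖lam - lam₀‖ ≤ ε →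
      (lam • (1 : Matrix (Fin n ⊕ Fin n) (Fin n ⊕ Fin n) ℂ) - F).det = 0 →
      lam = lam₀) :
    Matrix.trace ((2 * (π : ℂ) * Complex.I)⁻¹ •
        (∮ lam in C(lam₀, ε),
          (lam • (1 : Matrix (Fin n ⊕ Fin n) (Fin n ⊕ Fin n) ℂ) - F)⁻¹))
      = Matrix.trace ((2 * (π : ℂ) * Complex.I)⁻¹ •
        (∮ lam in C(lam₀, ε),
          (T lam)⁻¹ * ((2 * lam) • (1 : Matrix (Fin n) (Fin n) ℂ) + (2 : ℂ) • Ac))) := by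
  have hunit : ∀ z ∈ Metric.sphere lam₀ ε,
      IsUnit (z • (1 : Matrix (Fin n ⊕ Fin n) (Fin n ⊕ Fin n) ℂ) - F).det := fun z hz =>
    isUnit_iff_ne_zero.2 fun h0 => hε.ne' <| by
      rw [← mem_sphere_iff_norm.1 hz, honly z (mem_sphere_iff_norm.1 hz).le h0, sub_self,
        norm_zero]
  subst hF
  obtain rfl : T = fun z => z ^ 2 • 1 + (2 * z) • Ac + (1/2 : ℂ) • V := funext hT
  have hresolvent : ContinuousOn
      (fun z : ℂ => (z • 1 - fromBlocks (-Ac) 1 (Ac * Ac - (1/2 : ℂ) • V) (-Ac))⁻¹)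
      (Metric.sphere lam₀ ε) :=
    ContinuousOn.matrix_inv (by fun_prop) fun z hz => (hunit z hz).ne_zero
  have hpencil : ContinuousOn
      (fun z : ℂ => (z ^ 2 • 1 + (2 * z) • Ac + (1/2 : ℂ) • V)⁻¹ * ((2 * z) • 1 + (2 : ℂ) • Ac))
      (Metric.sphere lam₀ ε) :=
    (ContinuousOn.matrix_inv (by fun_prop) fun z hz =>
      (isUnit_det_pencil_of_isUnit_det_smul_one_sub _ _ z (hunit z hz)).ne_zero).mul (by fun_prop)
  rw [trace_smul, trace_smul, trace_circleIntegral (hresolvent.circleIntegrable hε.le),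
    trace_circleIntegral (hpencil.circleIntegrable hε.le),
    circleIntegral.integral_congr hε.le fun z hz =>
      trace_inv_smul_one_sub_eq_trace_pencil _ _ z (hunit z hz)]

/-- if `λ₀` is the only eigenvalue of the Hamilton matrix
`F = [[−A, I], [A² − V/2, −A]]` in the closed disc `|λ − λ₀| ≤ ε`, then the algebraic
multiplicity of `λ₀` as an eigenvalue of `F`, i.e. the trace of the Riesz projection
`(2πi)⁻¹ ∮ (λ − F)⁻¹ dλ`, equals its multiplicity as an eigenvalue of the pencil
`T(λ) = λ² + 2λA + V/2`, i.e. the trace of `(2πi)⁻¹ ∮ T(λ)⁻¹ T'(λ) dλ`. -/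
theorem trace_riesz_projection_eq_pencil_multiplicity
    (n : ℕ) (A : Matrix (Fin n) (Fin n) ℝ) (hA : Aᵀ = -A)
    (V : Matrix (Fin n) (Fin n) ℂ) (hV : Vᵀ = V)
    (Ac : Matrix (Fin n) (Fin n) ℂ) (hAc : Ac = A.map Complex.ofReal)
    (F : Matrix (Fin n ⊕ Fin n) (Fin n ⊕ Fin n) ℂ)
    (hF : F = Matrix.fromBlocks (-Ac) 1 (Ac * Ac - (1/2 : ℂ) • V) (-Ac))
    (T : ℂ → Matrix (Fin n) (Fin n) ℂ)
    (hT : ∀ lam : ℂ, T lam = lam ^ 2 • 1 + (2 * lam) • Ac + (1/2 : ℂ) • V)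
    (lam₀ : ℂ)
    (hlam₀ : (lam₀ • (1 : Matrix (Fin n ⊕ Fin n) (Fin n ⊕ Fin n) ℂ) - F).det = 0)
    (ε : ℝ) (hε : 0 < ε)
    (honly : ∀ lam : ℂ, ‖lam - lam₀‖ ≤ ε →
      (lam • (1 : Matrix (Fin n ⊕ Fin n) (Fin n ⊕ Fin n) ℂ) - F).det = 0 →
      lam = lam₀) :
    Matrix.trace ((2 * (π : ℂ) * Complex.I)⁻¹ •
        (∮ lam in C(lam₀, ε),
          (lam • (1 : Matrix (Fin n ⊕ Fin n) (Fin n ⊕ Fin n) ℂ) - F)⁻¹))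
      = Matrix.trace ((2 * (π : ℂ) * Complex.I)⁻¹ •
        (∮ lam in C(lam₀, ε),
          (T lam)⁻¹ * ((2 * lam) • (1 : Matrix (Fin n) (Fin n) ℂ) + (2 : ℂ) • Ac))) :=
  trace_riesz_projection_eq_pencil_multiplicity_general n V Ac F hF T hT lam₀ ε hε honly
end
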